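/- arXiv:2009.02257 — 11 statements merged into one kernel-verified Lean document; each statement's English description precedes it below -/
import Mathlib

section
/- Let n = (n_k) be a strictly increasing sequence of natural numbers with l-bounded gaps (n_{k+1} ≤ l·n_k for all k), and let B = (e_i) be a semi-normalized Schauder basis of a Banach space X with basis constant K and with sup‖e_i‖ = α₁, sup‖e_i*‖ = α₂. If B is K_u-n-unconditional for constant coefficients (i.e. ‖1_{εA}‖ ≤ K_u‖1_{ε'A}‖ whenever |A| ∈ n and ε, ε' are sign sequences on A), then B is C_u-unconditional for constant coefficients (the same inequality for all finite A) with C_u ≤ max{n₁α₁α₂, (2l−1)K_u·K}. -/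
/-!
Enumerate `A` increasingly and let `n = n_k ≤ |A| < n_{k+1} ≤ l n_k`. Cut the enumeration into
a first block of length `n` followed by pieces of length at most `n`, at most `l - 1` of them.
Every run of `n` consecutive elements is a difference of two Schauder partial sums of `1_{ε'A}`,
so by `n`-unconditionality its signed sum has norm at most `K_u · 2K ‖1_{ε'A}‖`; for the first
block a single partial sum suffices, giving `K_u K ‖1_{ε'A}‖`. A piece shorter than `n` lies in
the last run of length `n`, and twice its signed sum is the difference of two signed sums over
that run, so it obeys the same bound. Altogether `(1 + 2(l - 1)) K_u K = (2l - 1) K_u K`.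
Sets with fewer than `n_1` elements are handled directly: `‖1_{εA}‖ ≤ |A| α₁` while
`α₂ ‖1_{ε'A}‖ ≥ |e_i^*(1_{ε'A})| = 1`.
-/

open Finset

namespace Finset

variable (A : Finset ℕ)

lemma nth_mem_of_lt_card {j : ℕ} (hj : j < #A) : Nat.nth (· ∈ A) j ∈ A :=
  Nat.nth_mem_of_lt_card A.finite_toSet (by simpa using hj)

lemma count_nth_of_lt_card {j : ℕ} (hj : j < #A) :
    Nat.count (· ∈ A) (Nat.nth (· ∈ A) j) = j :=
  Nat.count_nth_of_lt_card_finite A.finite_toSet (by simpa using hj)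

lemma injOn_nth_range_card : Set.InjOn (Nat.nth (· ∈ A)) (range #A) := by
  simpa using Nat.nth_injOn A.finite_toSet

lemma sum_range_card_nth {M : Type*} [AddCommMonoid M] (g : ℕ → M) :
    ∑ j ∈ range #A, g (Nat.nth (· ∈ A) j) = ∑ i ∈ A, g i := by
  refine sum_nbij _ (fun j hj => A.nth_mem_of_lt_card (mem_range.mp hj)) A.injOn_nth_range_card
    (fun i hi => ?_) (fun _ _ => rfl)
  obtain ⟨j, hj, rfl⟩ := Nat.exists_lt_card_finite_nth_eq A.finite_toSet hi
  exact ⟨j, by simpa using hj, rfl⟩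

lemma exists_image_nth_range_eq_filter {c : ℕ} (hc : c ≤ #A) :
    ∃ c₀, (range c).image (Nat.nth (· ∈ A)) = A.filter (· < c₀) := by
  cases c with
  | zero => exact ⟨0, by simp⟩
  | succ c =>
    have hfin := A.finite_toSet
    have hcA : c < #hfin.toFinset := by simpa using hc
    refine ⟨Nat.nth (· ∈ A) c + 1, ?_⟩
    ext i
    simp only [mem_image, mem_range, mem_filter, Nat.lt_succ_iff]
    constructor
    · rintro ⟨j, hj, rfl⟩
      exact ⟨A.nth_mem_of_lt_card (by omega), Nat.nth_le_nth_of_lt_card hfin hj hcA⟩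
    · rintro ⟨hi, hic⟩
      obtain ⟨j, hj, rfl⟩ := Nat.exists_lt_card_finite_nth_eq hfin hi
      exact ⟨j, Nat.le_of_nth_le_nth_of_lt_card hfin hic hj, rfl⟩

end Finset

section SignedSums

variable {X : Type*} [NormedAddCommGroup X]

lemma norm_sum_Ico_le_of_norm_sum_range_le {y : ℕ → X} {m : ℕ} {K : ℝ}
    (hproj : ∀ c ≤ m, ‖∑ j ∈ range c, y j‖ ≤ K * ‖∑ j ∈ range m, y j‖)
    {a b : ℕ} (hab : a ≤ b) (hbm : b ≤ m) :
    ‖∑ j ∈ Ico a b, y j‖ ≤ 2 * K * ‖∑ j ∈ range m, y j‖ := by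
  rw [sum_Ico_eq_sub _ hab]
  linarith [norm_sub_le (∑ j ∈ range b, y j) (∑ j ∈ range a, y j), hproj b hbm,
    hproj a (hab.trans hbm)]

variable [NormedSpace ℝ X]

lemma norm_sum_smul_le_of_subset {v : ℕ → X} {R J : Finset ℕ} (hRJ : R ⊆ J) {C : ℝ}
    (hJ : ∀ η : ℕ → ℝ, (∀ j ∈ J, |η j| = 1) → ‖∑ j ∈ J, η j • v j‖ ≤ C)
    {θ : ℕ → ℝ} (hθ : ∀ j ∈ R, |θ j| = 1) : ‖∑ j ∈ R, θ j • v j‖ ≤ C := by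
  classical
  set η : ℝ → ℕ → ℝ := fun s j => if j ∈ R then s * θ j else 1
  have hη : ∀ s : ℝ, |s| = 1 → ‖∑ j ∈ J, η s j • v j‖ ≤ C := by
    refine fun s hs => hJ _ fun j _ => ?_
    simp only [η]
    split_ifs with hj
    · rw [abs_mul, hs, hθ j hj, one_mul]
    · exact abs_one
  have hdiff : ∑ j ∈ J, η 1 j • v j - ∑ j ∈ J, η (-1) j • v j =
      (2 : ℝ) • ∑ j ∈ R, θ j • v j := by
    rw [← sum_sub_distrib, smul_sum, ← inter_eq_right.mpr hRJ, ← sum_ite_mem]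
    refine sum_congr rfl fun j _ => ?_
    by_cases hj : j ∈ R <;> simp only [η, hj, if_true, if_false] <;> module
  have : 2 * ‖∑ j ∈ R, θ j • v j‖ ≤ C + C := by
    calc 2 * ‖∑ j ∈ R, θ j • v j‖ = ‖(2 : ℝ) • ∑ j ∈ R, θ j • v j‖ := by
          rw [norm_smul]; norm_num
      _ ≤ C + C := by
        rw [← hdiff]
        exact (norm_sub_le _ _).trans (add_le_add (hη 1 abs_one) (hη (-1) (by simp)))
  linarith

lemma norm_sum_Ico_le_mul_of_forall_block (y : ℕ → X) {m n : ℕ} (hnm : n ≤ m) {C : ℝ}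
    (hblock : ∀ a, a + n ≤ m → ∀ η : ℕ → ℝ, (∀ j ∈ Ico a (a + n), |η j| = 1) →
      ‖∑ j ∈ Ico a (a + n), η j • y j‖ ≤ C)
    (p : ℕ) {a : ℕ} (hpa : m ≤ a + p * n) {θ : ℕ → ℝ} (hθ : ∀ j ∈ Ico a m, |θ j| = 1) :
    ‖∑ j ∈ Ico a m, θ j • y j‖ ≤ p * C := by
  induction p generalizing a with
  | zero => simp [Ico_eq_empty_of_le (by simpa using hpa)]
  | succ p ih =>
    by_cases hshort : m ≤ a + n
    · have hlastblock := hblock (m - n) (by omega)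
      rw [Nat.sub_add_cancel hnm] at hlastblock
      have hlast := norm_sum_smul_le_of_subset (Ico_subset_Ico_left (by omega)) hlastblock hθ
      push_cast
      exact hlast.trans (le_mul_of_one_le_left ((norm_nonneg _).trans hlast)
        (le_add_of_nonneg_left p.cast_nonneg))
    · rw [← sum_Ico_consecutive _ (by omega : a ≤ a + n) (by omega : a + n ≤ m)]
      have hfirst := hblock a (by omega) θ
        fun j hj => hθ j (Ico_subset_Ico_right (by omega) hj)
      have hrest := ih (a := a + n) (by linarith [Nat.succ_mul p n])
        fun j hj => hθ j (Ico_subset_Ico_left (by omega) hj)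
      push_cast
      linarith [norm_add_le (∑ j ∈ Ico a (a + n), θ j • y j)
        (∑ j ∈ Ico (a + n) m, θ j • y j)]

theorem norm_sum_range_smul_le_of_forall_block (y : ℕ → X) {m n l : ℕ} {K Ku : ℝ}
    (hKu : 0 ≤ Ku)
    (hproj : ∀ c ≤ m, ‖∑ j ∈ range c, y j‖ ≤ K * ‖∑ j ∈ range m, y j‖)
    (hucc : ∀ a, a + n ≤ m → ∀ η : ℕ → ℝ, (∀ j ∈ Ico a (a + n), |η j| = 1) →
      ‖∑ j ∈ Ico a (a + n), η j • y j‖ ≤ Ku * ‖∑ j ∈ Ico a (a + n), y j‖)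
    (hnm : n ≤ m) (hml : m < l * n) {θ : ℕ → ℝ} (hθ : ∀ j ∈ range m, |θ j| = 1) :
    ‖∑ j ∈ range m, θ j • y j‖ ≤ (2 * l - 1) * Ku * K * ‖∑ j ∈ range m, y j‖ := by
  set N := ‖∑ j ∈ range m, y j‖
  have hl : 1 ≤ l := Nat.one_le_iff_ne_zero.mpr (by rintro rfl; simp at hml)
  have hhead : ‖∑ j ∈ range n, θ j • y j‖ ≤ Ku * (K * N) := by
    have := hucc 0 (by omega) θ fun j hj => hθ j (by simp at hj ⊢; omega)
    rw [zero_add, ← range_eq_Ico] at this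
    exact this.trans (mul_le_mul_of_nonneg_left (hproj n hnm) hKu)
  have htail : ‖∑ j ∈ Ico n m, θ j • y j‖ ≤ (l - 1 : ℕ) * (Ku * (2 * K * N)) :=
    norm_sum_Ico_le_mul_of_forall_block _ hnm
      (fun a ha η hη => (hucc a ha η hη).trans (mul_le_mul_of_nonneg_left
        (norm_sum_Ico_le_of_norm_sum_range_le hproj (by omega) ha) hKu))
      (l - 1) (by rw [Nat.sub_one_mul]; omega)
      fun j hj => hθ j (by simp at hj ⊢; omega)
  rw [← sum_range_add_sum_Ico _ hnm]
  refine (norm_add_le _ _).trans ((add_le_add hhead htail).trans_eq ?_)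
  rw [Nat.cast_sub hl]
  push_cast
  ring

end SignedSums

section Biorthogonal

variable {X : Type*} [NormedAddCommGroup X] [NormedSpace ℝ X] {e : ℕ → X} {f : ℕ → X →L[ℝ] ℝ}

lemma norm_sum_signs_smul_le_card_mul {α₁ : ℝ} (hα₁ : ∀ i, ‖e i‖ ≤ α₁) {A : Finset ℕ}
    {ε : ℕ → ℝ} (hε : ∀ i ∈ A, |ε i| = 1) : ‖∑ i ∈ A, ε i • e i‖ ≤ #A * α₁ :=
  calc ‖∑ i ∈ A, ε i • e i‖ ≤ ∑ i ∈ A, ‖ε i • e i‖ := norm_sum_le _ _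
    _ ≤ ∑ _i ∈ A, α₁ := sum_le_sum fun i hi => by
        rw [norm_smul, Real.norm_eq_abs, hε i hi, one_mul]
        exact hα₁ i
    _ = #A * α₁ := by rw [sum_const, nsmul_eq_mul]

lemma apply_sum_smul_of_biorthogonal (hbi : ∀ i j, f i (e j) = if i = j then (1 : ℝ) else 0)
    (B : Finset ℕ) (η : ℕ → ℝ) (i : ℕ) :
    f i (∑ j ∈ B, η j • e j) = if i ∈ B then η i else 0 := by
  simp only [map_sum, map_smul, hbi, smul_eq_mul, mul_ite, mul_one, mul_zero]
  exact sum_ite_eq B i η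

lemma sum_range_apply_smul_of_biorthogonal
    (hbi : ∀ i j, f i (e j) = if i = j then (1 : ℝ) else 0)
    (B : Finset ℕ) (η : ℕ → ℝ) (c : ℕ) :
    ∑ i ∈ range c, f i (∑ j ∈ B, η j • e j) • e i = ∑ j ∈ B.filter (· < c), η j • e j := by
  simp only [apply_sum_smul_of_biorthogonal hbi, ite_smul, zero_smul]
  rw [sum_ite_mem]
  congr 1
  ext j
  simp [and_comm]

lemma one_le_mul_norm_sum_signs (hbi : ∀ i j, f i (e j) = if i = j then (1 : ℝ) else 0)
    {α₂ : ℝ} (hα₂ : ∀ i, ‖f i‖ ≤ α₂) {A : Finset ℕ} (hA : A.Nonempty) {ε : ℕ → ℝ}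
    (hε : ∀ i ∈ A, |ε i| = 1) : 1 ≤ α₂ * ‖∑ i ∈ A, ε i • e i‖ := by
  obtain ⟨i, hi⟩ := hA
  calc (1 : ℝ) = |f i (∑ j ∈ A, ε j • e j)| := by
        rw [apply_sum_smul_of_biorthogonal hbi, if_pos hi, hε i hi]
    _ ≤ ‖f i‖ * ‖∑ j ∈ A, ε j • e j‖ := (f i).le_opNorm _
    _ ≤ α₂ * ‖∑ j ∈ A, ε j • e j‖ := by gcongr; exact hα₂ i

lemma norm_sum_range_nth_le_of_biorthogonal
    (hbi : ∀ i j, f i (e j) = if i = j then (1 : ℝ) else 0) {K : ℝ}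
    (hSch : ∀ (x : X) (m : ℕ), ‖∑ i ∈ range m, f i x • e i‖ ≤ K * ‖x‖)
    (A : Finset ℕ) (η : ℕ → ℝ) {c : ℕ} (hc : c ≤ #A) :
    ‖∑ j ∈ range c, η (Nat.nth (· ∈ A) j) • e (Nat.nth (· ∈ A) j)‖ ≤
      K * ‖∑ i ∈ A, η i • e i‖ := by
  obtain ⟨c₀, hc₀⟩ := A.exists_image_nth_range_eq_filter hc
  have hinj := A.injOn_nth_range_card.mono (coe_subset.mpr (range_subset_range.mpr hc))
  rw [← sum_image (f := fun i => η i • e i) hinj, hc₀, ← sum_range_apply_smul_of_biorthogonal hbi]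
  exact hSch _ c₀

theorem norm_sum_signs_le_of_card_lt_mul
    (hbi : ∀ i j, f i (e j) = if i = j then (1 : ℝ) else 0) {K : ℝ}
    (hSch : ∀ (x : X) (m : ℕ), ‖∑ i ∈ range m, f i x • e i‖ ≤ K * ‖x‖)
    {n l : ℕ} {Ku : ℝ} (hKu : 0 ≤ Ku)
    (hucc : ∀ (B : Finset ℕ) (ε ε' : ℕ → ℝ), #B = n → (∀ i ∈ B, |ε i| = 1) →
      (∀ i ∈ B, |ε' i| = 1) → ‖∑ i ∈ B, ε i • e i‖ ≤ Ku * ‖∑ i ∈ B, ε' i • e i‖)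
    {A : Finset ℕ} (hnA : n ≤ #A) (hAl : #A < l * n) {ε ε' : ℕ → ℝ}
    (hε : ∀ i ∈ A, |ε i| = 1) (hε' : ∀ i ∈ A, |ε' i| = 1) :
    ‖∑ i ∈ A, ε i • e i‖ ≤ (2 * l - 1) * Ku * K * ‖∑ i ∈ A, ε' i • e i‖ := by
  set τ := Nat.nth (· ∈ A)
  set y : ℕ → X := fun j => ε' (τ j) • e (τ j)
  have hτ : ∀ j ∈ range #A, τ j ∈ A := fun j hj => A.nth_mem_of_lt_card (mem_range.mp hj)
  have hsum_ε' : ∑ i ∈ A, ε' i • e i = ∑ j ∈ range #A, y j := (A.sum_range_card_nth _).symm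
  have hsum_ε : ∑ i ∈ A, ε i • e i = ∑ j ∈ range #A, (ε (τ j) * ε' (τ j)) • y j := by
    rw [← A.sum_range_card_nth]
    refine sum_congr rfl fun j hj => ?_
    rw [smul_smul, mul_assoc, ← abs_mul_abs_self, hε' _ (hτ j hj), mul_one, mul_one]
  rw [hsum_ε, hsum_ε']
  refine norm_sum_range_smul_le_of_forall_block y hKu
    (fun c hc => hsum_ε' ▸ norm_sum_range_nth_le_of_biorthogonal hbi hSch A ε' hc)
    (fun a ha η hη => ?_) hnA hAl
    fun j hj => by rw [abs_mul, hε _ (hτ j hj), hε' _ (hτ j hj), one_mul]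
  have hIco : Ico a (a + n) ⊆ range #A := fun j hj => by simp at hj ⊢; omega
  have hinj : Set.InjOn τ (Ico a (a + n)) :=
    A.injOn_nth_range_card.mono (coe_subset.mpr hIco)
  have := hucc ((Ico a (a + n)).image τ) (fun i => η (Nat.count (· ∈ A) i) * ε' i) ε'
    (by simp [card_image_of_injOn hinj]) ?_ ?_
  · rw [sum_image (f := fun i => (η (Nat.count (· ∈ A) i) * ε' i) • e i) hinj,
      sum_image (f := fun i => ε' i • e i) hinj] at this
    convert this using 3 with j hj
    rw [A.count_nth_of_lt_card (mem_range.mp (hIco hj)), mul_smul]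
  · simp only [mem_image]
    rintro _ ⟨j, hj, rfl⟩
    rw [abs_mul, A.count_nth_of_lt_card (mem_range.mp (hIco hj)), hη j hj,
      hε' _ (hτ j (hIco hj)), one_mul]
  · simp only [mem_image]
    rintro _ ⟨j, hj, rfl⟩
    exact hε' _ (hτ j (hIco hj))

end Biorthogonal

theorem stmt0_general
    {X : Type*} [NormedAddCommGroup X] [NormedSpace ℝ X]
    (e : ℕ → X) (f : ℕ → X →L[ℝ] ℝ)
    (hbi : ∀ i j, f i (e j) = if i = j then (1 : ℝ) else 0)
    (α₁ α₂ : ℝ) (hα₁pos : 0 < α₁)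
    (hα₁ : ∀ i, ‖e i‖ ≤ α₁) (hα₂ : ∀ i, ‖f i‖ ≤ α₂)
    (K : ℝ)
    (hSch : ∀ (x : X) (m : ℕ), ‖∑ i ∈ Finset.range m, f i x • e i‖ ≤ K * ‖x‖)
    (nseq : ℕ → ℕ) (hmono : StrictMono nseq)
    (l : ℕ) (hgaps : ∀ k, nseq (k + 1) ≤ l * nseq k)
    (Ku : ℝ) (hKu : 0 < Ku)
    (hucc : ∀ (A : Finset ℕ) (ε ε' : ℕ → ℝ),
      (∃ k, A.card = nseq k) → (∀ i ∈ A, |ε i| = 1) → (∀ i ∈ A, |ε' i| = 1) →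
      ‖∑ i ∈ A, ε i • e i‖ ≤ Ku * ‖∑ i ∈ A, ε' i • e i‖) :
    ∀ (A : Finset ℕ) (ε ε' : ℕ → ℝ),
      (∀ i ∈ A, |ε i| = 1) → (∀ i ∈ A, |ε' i| = 1) →
      ‖∑ i ∈ A, ε i • e i‖ ≤
        max ((nseq 0 : ℝ) * α₁ * α₂) ((2 * (l : ℝ) - 1) * Ku * K) *
          ‖∑ i ∈ A, ε' i • e i‖ := by
  intro A ε ε' hε hε'
  set N := ‖∑ i ∈ A, ε' i • e i‖
  rcases lt_or_ge #A (nseq 0) with hsmall | hlarge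
  · rcases A.eq_empty_or_nonempty with rfl | hA
    · simp [N]
    have hN := one_le_mul_norm_sum_signs hbi hα₂ hA hε'
    calc ‖∑ i ∈ A, ε i • e i‖ ≤ #A * α₁ := norm_sum_signs_smul_le_card_mul hα₁ hε
      _ ≤ #A * α₁ * (α₂ * N) := le_mul_of_one_le_right (by positivity) hN
      _ ≤ nseq 0 * α₁ * (α₂ * N) := mul_le_mul_of_nonneg_right (by gcongr) (by linarith)
      _ ≤ max ((nseq 0 : ℝ) * α₁ * α₂) ((2 * (l : ℝ) - 1) * Ku * K) * N := by
        rw [← mul_assoc]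
        gcongr
        exact le_max_left _ _
  · obtain ⟨k, hk, hk'⟩ :=
      hmono.exists_between_of_tendsto_atTop hmono.tendsto_atTop (x := #A + 1) (by omega)
    calc ‖∑ i ∈ A, ε i • e i‖ ≤ (2 * l - 1) * Ku * K * N :=
          norm_sum_signs_le_of_card_lt_mul hbi hSch hKu.le
            (fun B ε ε' hB => hucc B ε ε' ⟨k, hB⟩) (by omega)
            ((by omega : #A < nseq (k + 1)).trans_le (hgaps k)) hε hε'
      _ ≤ max ((nseq 0 : ℝ) * α₁ * α₂) ((2 * (l : ℝ) - 1) * Ku * K) * N := by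
        gcongr
        exact le_max_right _ _

/-- For a sequence `nseq` with `l`-bounded gaps and a semi-normalized Schauder
basis with basis constant `K`, `Ku`-`n`-unconditionality for constant coefficients implies
unconditionality for constant coefficients with constant `max (n₁ α₁ α₂) ((2l-1) Ku K)`. -/
theorem stmt0
    {X : Type*} [NormedAddCommGroup X] [NormedSpace ℝ X]
    (e : ℕ → X) (f : ℕ → X →L[ℝ] ℝ)
    (hbi : ∀ i j, f i (e j) = if i = j then (1 : ℝ) else 0)
    (α₁ α₂ : ℝ) (hα₁pos : 0 < α₁) (hα₂pos : 0 < α₂)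
    (hα₁ : ∀ i, ‖e i‖ ≤ α₁) (hα₂ : ∀ i, ‖f i‖ ≤ α₂)
    (K : ℝ) (hKpos : 0 < K)
    (hSch : ∀ (x : X) (m : ℕ), ‖∑ i ∈ Finset.range m, f i x • e i‖ ≤ K * ‖x‖)
    (nseq : ℕ → ℕ) (hmono : StrictMono nseq) (hn1 : 0 < nseq 0)
    (l : ℕ) (hl : 2 ≤ l) (hgaps : ∀ k, nseq (k + 1) ≤ l * nseq k)
    (Ku : ℝ) (hKu : 0 < Ku)
    (hucc : ∀ (A : Finset ℕ) (ε ε' : ℕ → ℝ),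
      (∃ k, A.card = nseq k) → (∀ i ∈ A, |ε i| = 1) → (∀ i ∈ A, |ε' i| = 1) →
      ‖∑ i ∈ A, ε i • e i‖ ≤ Ku * ‖∑ i ∈ A, ε' i • e i‖) :
    ∀ (A : Finset ℕ) (ε ε' : ℕ → ℝ),
      (∀ i ∈ A, |ε i| = 1) → (∀ i ∈ A, |ε' i| = 1) →
      ‖∑ i ∈ A, ε i • e i‖ ≤
        max ((nseq 0 : ℝ) * α₁ * α₂) ((2 * (l : ℝ) - 1) * Ku * K) *
          ‖∑ i ∈ A, ε' i • e i‖ :=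
  stmt0_general e f hbi α₁ α₂ hα₁pos hα₁ hα₂ K hSch nseq hmono l hgaps Ku hKu hucc
end

section
/- Let n be a sequence with l-bounded gaps and B a semi-normalized Schauder basis with basis constant K. If B has the n-UL property with constants C₁, C₂ (i.e. C₁⁻¹ min_{i∈A}|a_i|·‖1_A‖ ≤ ‖Σ_{i∈A} a_i e_i‖ ≤ C₂ max_{i∈A}|a_i|·‖1_A‖ for all A with |A| ∈ n), then B has the UL property for all finite sets A, with constants C₁' ≤ max{n₁α₁α₂, K²C₁ + 2(l−1)C₁K} and C₂' ≤ max{n₁α₁α₂, K²C₂ + 2(l−1)C₂K}. -/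
/-!
Split `A` into an initial piece of fewer than `N = nₖ ≤ |A| < nₖ₊₁` elements followed by
`⌊|A| / N⌋ ≤ l - 1` consecutive blocks of exactly `N` elements. The initial piece is a partial
sum of the first `N` elements of `A`, and each block is a difference of two partial sums of `A`;
so the basis constant bounds them by `K²` and `2K` times the corresponding vector on all of `A`,
and the `n`-UL property applies to each piece of size `N`. Sets with `|A| < n₁` are handled
crudely through `‖eᵢ‖ ≤ α₁` and `|eᵢ*(x)| ≤ α₂ ‖x‖`.
-/

open Finset

theorem Nat.exists_eq_of_map_zero_of_le_succ {u : ℕ → ℕ} (h0 : u 0 = 0)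
    (hu : ∀ n, u (n + 1) ≤ u n + 1) {p m : ℕ} (hp : p ≤ u m) : ∃ n, u n = p := by
  induction m with
  | zero => exact ⟨0, by omega⟩
  | succ m ih =>
    rcases hp.eq_or_lt with h | h
    · exact ⟨m + 1, h.symm⟩
    · exact ih (by have := hu m; omega)

theorem StrictMono.exists_le_lt_succ {u : ℕ → ℕ} (hu : StrictMono u) {x : ℕ} (hx : u 0 ≤ x) :
    ∃ k, u k ≤ x ∧ x < u (k + 1) := by
  set k := Nat.findGreatest (fun k => u k ≤ x) x
  refine ⟨k, Nat.findGreatest_spec (P := fun k => u k ≤ x) (Nat.zero_le x) hx, ?_⟩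
  by_cases hkx : k + 1 ≤ x
  · exact not_le.1 (Nat.findGreatest_is_greatest (P := fun k => u k ≤ x) (Nat.lt_add_one k) hkx)
  · have : k + 1 ≤ u (k + 1) := hu.id_le (k + 1)
    omega

namespace Finset

theorem exists_card_filter_lt_eq (A : Finset ℕ) {p : ℕ} (hp : p ≤ #A) :
    ∃ c, #{i ∈ A | i < c} = p := by
  obtain ⟨m, hm⟩ := A.exists_nat_subset_range
  have hAm : {i ∈ A | i < m} = A := filter_true_of_mem fun i hi => mem_range.1 (hm hi)
  refine Nat.exists_eq_of_map_zero_of_le_succ (u := fun c => #{i ∈ A | i < c}) (by simp)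
    (fun c => ?_) (m := m) (by simpa [hAm] using hp)
  calc #{i ∈ A | i < c + 1} ≤ #(insert c {i ∈ A | i < c}) :=
        card_le_card fun i => by simp only [mem_filter, mem_insert]; grind
    _ ≤ #{i ∈ A | i < c} + 1 := card_insert_le _ _

theorem lt_of_card_filter_lt_lt {A : Finset ℕ} {c c' : ℕ}
    (h : #{i ∈ A | i < c} < #{i ∈ A | i < c'}) : c < c' := by
  by_contra! hle
  exact h.not_ge (card_le_card (monotone_filter_right A fun _ _ hi => hi.trans_le hle))

theorem filter_filter_lt_of_le (A : Finset ℕ) {c c' : ℕ} (h : c ≤ c') :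
    {i ∈ {i ∈ A | i < c'} | i < c} = {i ∈ A | i < c} := by
  ext i
  simp only [mem_filter]
  grind

end Finset

theorem norm_sum_const_smul {ι E : Type*} [SeminormedAddCommGroup E] [NormedSpace ℝ E]
    (B : Finset ι) (v : ι → E) {t : ℝ} (ht : 0 ≤ t) :
    ‖∑ i ∈ B, t • v i‖ = t * ‖∑ i ∈ B, v i‖ := by
  rw [← smul_sum, norm_smul, Real.norm_of_nonneg ht]

section Basis

variable {X : Type*} [NormedAddCommGroup X] [NormedSpace ℝ X] {e : ℕ → X} {f : ℕ → X →L[ℝ] ℝ}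

theorem coord_sum_smul (hbi : ∀ i j, f i (e j) = if i = j then (1 : ℝ) else 0)
    (B : Finset ℕ) (b : ℕ → ℝ) (i : ℕ) :
    f i (∑ j ∈ B, b j • e j) = if i ∈ B then b i else 0 := by
  simp [hbi]

theorem abs_le_mul_norm_sum_smul (hbi : ∀ i j, f i (e j) = if i = j then (1 : ℝ) else 0)
    {α₂ : ℝ} (hα₂ : ∀ i, ‖f i‖ ≤ α₂) {B : Finset ℕ} (b : ℕ → ℝ) {i : ℕ} (hi : i ∈ B) :
    |b i| ≤ α₂ * ‖∑ j ∈ B, b j • e j‖ := by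
  calc |b i| = ‖f i (∑ j ∈ B, b j • e j)‖ := by
        rw [coord_sum_smul hbi, if_pos hi, Real.norm_eq_abs]
    _ ≤ ‖f i‖ * ‖∑ j ∈ B, b j • e j‖ := (f i).le_opNorm _
    _ ≤ α₂ * ‖∑ j ∈ B, b j • e j‖ := by gcongr; exact hα₂ i

theorem norm_sum_smul_le_card_mul (hbi : ∀ i j, f i (e j) = if i = j then (1 : ℝ) else 0)
    {α₁ α₂ : ℝ} (hα₁ : ∀ i, ‖e i‖ ≤ α₁) (hα₂ : ∀ i, ‖f i‖ ≤ α₂) {A : Finset ℕ} {b b' : ℕ → ℝ}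
    (hbb' : ∀ i ∈ A, ∀ j ∈ A, |b i| ≤ |b' j|) :
    ‖∑ i ∈ A, b i • e i‖ ≤ #A * α₁ * α₂ * ‖∑ i ∈ A, b' i • e i‖ := by
  rcases A.eq_empty_or_nonempty with rfl | ⟨j, hj⟩
  · simp
  have hα₁0 : 0 ≤ α₁ := (norm_nonneg _).trans (hα₁ 0)
  calc ‖∑ i ∈ A, b i • e i‖ ≤ ∑ i ∈ A, ‖b i • e i‖ := norm_sum_le _ _
    _ ≤ ∑ _i ∈ A, |b' j| * α₁ := sum_le_sum fun i hi => by
        rw [norm_smul, Real.norm_eq_abs]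
        exact mul_le_mul (hbb' i hi j hj) (hα₁ i) (norm_nonneg _) (abs_nonneg _)
    _ = #A * (|b' j| * α₁) := by rw [sum_const, nsmul_eq_mul]
    _ ≤ #A * (α₂ * ‖∑ i ∈ A, b' i • e i‖ * α₁) := by
        gcongr; exact abs_le_mul_norm_sum_smul hbi hα₂ b' hj
    _ = #A * α₁ * α₂ * ‖∑ i ∈ A, b' i • e i‖ := by ring

theorem sum_range_coord_sum_smul (hbi : ∀ i j, f i (e j) = if i = j then (1 : ℝ) else 0)
    (B : Finset ℕ) (b : ℕ → ℝ) (m : ℕ) :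
    ∑ i ∈ range m, f i (∑ j ∈ B, b j • e j) • e i = ∑ i ∈ B with i < m, b i • e i := by
  simp_rw [coord_sum_smul hbi, ite_smul, zero_smul, ← sum_filter]
  refine sum_congr ?_ fun _ _ => rfl
  ext i
  simp only [mem_filter, mem_range]
  tauto

theorem norm_sum_filter_lt_smul_le (hbi : ∀ i j, f i (e j) = if i = j then (1 : ℝ) else 0)
    {K : ℝ} (hSch : ∀ (x : X) (m : ℕ), ‖∑ i ∈ range m, f i x • e i‖ ≤ K * ‖x‖)
    (B : Finset ℕ) (b : ℕ → ℝ) (c : ℕ) :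
    ‖∑ i ∈ B with i < c, b i • e i‖ ≤ K * ‖∑ i ∈ B, b i • e i‖ := by
  rw [← sum_range_coord_sum_smul hbi]
  exact hSch _ c

theorem norm_sum_smul_le_of_blocks (hbi : ∀ i j, f i (e j) = if i = j then (1 : ℝ) else 0)
    {K : ℝ} (hK : 0 ≤ K) (hSch : ∀ (x : X) (m : ℕ), ‖∑ i ∈ range m, f i x • e i‖ ≤ K * ‖x‖)
    {A : Finset ℕ} {N : ℕ} (hN0 : 0 < N) (hN : N ≤ #A) {b b' : ℕ → ℝ} {D : ℝ} (hD : 0 ≤ D)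
    (hblock : ∀ B ⊆ A, #B = N → ‖∑ i ∈ B, b i • e i‖ ≤ D * ‖∑ i ∈ B, b' i • e i‖) :
    ‖∑ i ∈ A, b i • e i‖ ≤ (K ^ 2 + 2 * (#A / N : ℕ) * K) * D * ‖∑ i ∈ A, b' i • e i‖ := by
  set y := ‖∑ i ∈ A, b' i • e i‖
  obtain ⟨cN, hcN⟩ := A.exists_card_filter_lt_eq hN
  suffices H : ∀ s c, #{i ∈ A | i < c} = s →
      ‖∑ i ∈ A with i < c, b i • e i‖ ≤ (K ^ 2 + 2 * (s / N : ℕ) * K) * D * y by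
    obtain ⟨m, hm⟩ := A.exists_nat_subset_range
    have hAm : {i ∈ A | i < m} = A := filter_true_of_mem fun i hi => mem_range.1 (hm hi)
    simpa only [hAm] using H _ m rfl
  intro s
  induction s using Nat.strong_induction_on with
  | _ s ih =>
  intro c hc
  by_cases hsN : s < N
  · have hccN : c < cN := lt_of_card_filter_lt_lt (A := A) (by omega)
    rw [Nat.div_eq_of_lt hsN, ← filter_filter_lt_of_le A hccN.le]
    calc ‖∑ i ∈ {i ∈ A | i < cN} with i < c, b i • e i‖
        ≤ K * ‖∑ i ∈ A with i < cN, b i • e i‖ := norm_sum_filter_lt_smul_le hbi hSch _ _ _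
      _ ≤ K * (D * ‖∑ i ∈ A with i < cN, b' i • e i‖) := by
        gcongr; exact hblock _ (filter_subset _ _) hcN
      _ ≤ K * (D * (K * y)) := by gcongr; exact norm_sum_filter_lt_smul_le hbi hSch _ _ _
      _ = (K ^ 2 + 2 * ((0 : ℕ) : ℝ) * K) * D * y := by push_cast; ring
  · rw [not_lt] at hsN
    have hsA : s ≤ #A := hc ▸ card_filter_le _ _
    obtain ⟨c₀, hc₀⟩ := A.exists_card_filter_lt_eq (p := s - N) (by omega)
    have hc₀c : c₀ < c := lt_of_card_filter_lt_lt (A := A) (by omega)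
    have hsub : {i ∈ A | i < c₀} ⊆ {i ∈ A | i < c} :=
      monotone_filter_right A fun _ _ hi => hi.trans hc₀c
    have hblk : #({i ∈ A | i < c} \ {i ∈ A | i < c₀}) = N := by
      rw [card_sdiff_of_subset hsub]; omega
    have hdiff : ∀ g : ℕ → ℝ, ‖∑ i ∈ {i ∈ A | i < c} \ {i ∈ A | i < c₀}, g i • e i‖
        ≤ 2 * K * ‖∑ i ∈ A, g i • e i‖ := fun g => by
      rw [sum_sdiff_eq_sub hsub]
      refine (norm_sub_le _ _).trans ?_
      linarith [norm_sum_filter_lt_smul_le hbi hSch A g c,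
        norm_sum_filter_lt_smul_le hbi hSch A g c₀]
    calc ‖∑ i ∈ A with i < c, b i • e i‖
        = ‖∑ i ∈ A with i < c₀, b i • e i
            + ∑ i ∈ {i ∈ A | i < c} \ {i ∈ A | i < c₀}, b i • e i‖ := by
          rw [add_comm, sum_sdiff hsub]
      _ ≤ (K ^ 2 + 2 * ((s - N) / N : ℕ) * K) * D * y + D * (2 * K * y) := by
          refine (norm_add_le _ _).trans (add_le_add (ih _ (by omega) c₀ hc₀) ?_)
          refine (hblock _ (sdiff_subset.trans (filter_subset _ _)) hblk).trans ?_
          gcongr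
          exact hdiff b'
      _ = (K ^ 2 + 2 * (s / N : ℕ) * K) * D * y := by
          rw [Nat.div_eq_sub_div hN0 hsN]; push_cast; ring

end Basis

-- With `(b, b') = (a, max |a|)` this is the upper UL estimate, with `(min |a|, a)` the lower one.
theorem norm_sum_smul_le_of_bounded_gaps
    {X : Type*} [NormedAddCommGroup X] [NormedSpace ℝ X] {e : ℕ → X} {f : ℕ → X →L[ℝ] ℝ}
    (hbi : ∀ i j, f i (e j) = if i = j then (1 : ℝ) else 0)
    {α₁ α₂ : ℝ} (hα₁ : ∀ i, ‖e i‖ ≤ α₁) (hα₂ : ∀ i, ‖f i‖ ≤ α₂)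
    {K : ℝ} (hK : 0 ≤ K) (hSch : ∀ (x : X) (m : ℕ), ‖∑ i ∈ range m, f i x • e i‖ ≤ K * ‖x‖)
    {nseq : ℕ → ℕ} (hmono : StrictMono nseq) (hn1 : 0 < nseq 0)
    {l : ℕ} (hgaps : ∀ k, nseq (k + 1) ≤ l * nseq k) {C : ℝ} (hC : 0 ≤ C)
    {A : Finset ℕ} {b b' : ℕ → ℝ} (hbb' : ∀ i ∈ A, ∀ j ∈ A, |b i| ≤ |b' j|)
    (hUL : ∀ B ⊆ A, (∃ k, #B = nseq k) → ‖∑ i ∈ B, b i • e i‖ ≤ C * ‖∑ i ∈ B, b' i • e i‖) :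
    ‖∑ i ∈ A, b i • e i‖ ≤
      max ((nseq 0 : ℝ) * α₁ * α₂) (K ^ 2 * C + 2 * ((l : ℝ) - 1) * C * K) *
        ‖∑ i ∈ A, b' i • e i‖ := by
  rcases lt_or_ge #A (nseq 0) with hsmall | hlarge
  · have hα : 0 ≤ α₁ * α₂ :=
      mul_nonneg ((norm_nonneg _).trans (hα₁ 0)) ((norm_nonneg _).trans (hα₂ 0))
    refine (norm_sum_smul_le_card_mul hbi hα₁ hα₂ hbb').trans ?_
    gcongr
    refine le_trans ?_ (le_max_left _ _)
    rw [mul_assoc, mul_assoc]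
    gcongr
  · obtain ⟨k, hk, hk1⟩ := hmono.exists_le_lt_succ hlarge
    have hN0 : 0 < nseq k := hn1.trans_le (hmono.monotone k.zero_le)
    have hq : #A / nseq k + 1 ≤ l := (Nat.div_lt_iff_lt_mul hN0).2 (hk1.trans_le (hgaps k))
    have hqR : ((#A / nseq k : ℕ) : ℝ) ≤ l - 1 := by
      have := (Nat.cast_le (α := ℝ)).2 hq
      push_cast at this
      linarith
    refine (norm_sum_smul_le_of_blocks hbi hK hSch hN0 hk hC
      fun B hB hBN => hUL B hB ⟨k, hBN⟩).trans ?_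
    gcongr
    refine le_trans ?_ (le_max_right _ _)
    nlinarith [mul_nonneg hK hC]

theorem stmt1_general
    {X : Type*} [NormedAddCommGroup X] [NormedSpace ℝ X]
    (e : ℕ → X) (f : ℕ → X →L[ℝ] ℝ)
    (hbi : ∀ i j, f i (e j) = if i = j then (1 : ℝ) else 0)
    (α₁ α₂ : ℝ)
    (hα₁ : ∀ i, ‖e i‖ ≤ α₁) (hα₂ : ∀ i, ‖f i‖ ≤ α₂)
    (K : ℝ) (hKpos : 0 < K)
    (hSch : ∀ (x : X) (m : ℕ), ‖∑ i ∈ Finset.range m, f i x • e i‖ ≤ K * ‖x‖)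
    (nseq : ℕ → ℕ) (hmono : StrictMono nseq) (hn1 : 0 < nseq 0)
    (l : ℕ) (hgaps : ∀ k, nseq (k + 1) ≤ l * nseq k)
    (C₁ C₂ : ℝ) (hC₁ : 0 < C₁) (hC₂ : 0 < C₂)
    (hUL : ∀ (A : Finset ℕ) (hA : A.Nonempty) (a : ℕ → ℝ), (∃ k, A.card = nseq k) →
      C₁⁻¹ * (A.inf' hA fun i => |a i|) * ‖∑ i ∈ A, e i‖ ≤ ‖∑ i ∈ A, a i • e i‖ ∧
      ‖∑ i ∈ A, a i • e i‖ ≤ C₂ * (A.sup' hA fun i => |a i|) * ‖∑ i ∈ A, e i‖) :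
    ∀ (A : Finset ℕ) (hA : A.Nonempty) (a : ℕ → ℝ),
      (max ((nseq 0 : ℝ) * α₁ * α₂) (K ^ 2 * C₁ + 2 * ((l : ℝ) - 1) * C₁ * K))⁻¹ *
          (A.inf' hA fun i => |a i|) * ‖∑ i ∈ A, e i‖ ≤ ‖∑ i ∈ A, a i • e i‖ ∧
      ‖∑ i ∈ A, a i • e i‖ ≤
        max ((nseq 0 : ℝ) * α₁ * α₂) (K ^ 2 * C₂ + 2 * ((l : ℝ) - 1) * C₂ * K) *
          (A.sup' hA fun i => |a i|) * ‖∑ i ∈ A, e i‖ := by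
  intro A hA a
  set inf := A.inf' hA fun i => |a i|
  set sup := A.sup' hA fun i => |a i|
  have hinf : 0 ≤ inf := le_inf' hA _ fun i _ => abs_nonneg (a i)
  have hsup : 0 ≤ sup := (abs_nonneg _).trans (le_sup' (fun i => |a i|) hA.choose_spec)
  have nonempty_of_card : ∀ B : Finset ℕ, (∃ k, #B = nseq k) → B.Nonempty :=
    fun B ⟨k, hk⟩ => card_pos.1 (hk ▸ hn1.trans_le (hmono.monotone k.zero_le))
  constructor
  · have hlower := norm_sum_smul_le_of_bounded_gaps hbi hα₁ hα₂ hKpos.le hSch hmono hn1 hgaps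
      hC₁.le (b := fun _ => inf) (b' := a)
      (fun i _ j hj => (abs_of_nonneg hinf).trans_le (inf'_le _ hj))
      fun B hB hBk => by
        have hUL₁ := (hUL B (nonempty_of_card B hBk) a hBk).1
        rw [mul_assoc, inv_mul_le_iff₀ hC₁] at hUL₁
        rw [norm_sum_const_smul B e hinf]
        exact le_trans (by gcongr; exact inf'_mono _ hB _) hUL₁
    have hα : 0 ≤ (nseq 0 : ℝ) * α₁ * α₂ := mul_nonneg
      (mul_nonneg (Nat.cast_nonneg _) ((norm_nonneg _).trans (hα₁ 0))) ((norm_nonneg _).trans (hα₂ 0))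
    rw [norm_sum_const_smul A e hinf] at hlower
    rw [mul_assoc]
    exact inv_mul_le_of_le_mul₀ (le_max_of_le_left hα) (norm_nonneg _) hlower
  · have hupper := norm_sum_smul_le_of_bounded_gaps hbi hα₁ hα₂ hKpos.le hSch hmono hn1 hgaps
      hC₂.le (b := a) (b' := fun _ => sup)
      (fun i hi _ _ => (le_sup' (fun i => |a i|) hi).trans_eq (abs_of_nonneg hsup).symm)
      fun B hB hBk => by
        have hUL₂ := (hUL B (nonempty_of_card B hBk) a hBk).2
        rw [norm_sum_const_smul B e hsup]
        refine hUL₂.trans ?_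
        rw [mul_assoc]
        gcongr
        exact sup'_mono _ hB _
    rwa [norm_sum_const_smul A e hsup, ← mul_assoc] at hupper

/-- For a sequence with `l`-bounded gaps and a Schauder basis with basis
constant `K`, the `n`-UL property with constants `C₁, C₂` implies the UL property (for all
finite sets) with constants `max (n₁α₁α₂) (K²C₁ + 2(l-1)C₁K)` and
`max (n₁α₁α₂) (K²C₂ + 2(l-1)C₂K)`. -/
theorem stmt1
    {X : Type*} [NormedAddCommGroup X] [NormedSpace ℝ X]
    (e : ℕ → X) (f : ℕ → X →L[ℝ] ℝ)
    (hbi : ∀ i j, f i (e j) = if i = j then (1 : ℝ) else 0)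
    (α₁ α₂ : ℝ) (hα₁pos : 0 < α₁) (hα₂pos : 0 < α₂)
    (hα₁ : ∀ i, ‖e i‖ ≤ α₁) (hα₂ : ∀ i, ‖f i‖ ≤ α₂)
    (K : ℝ) (hKpos : 0 < K)
    (hSch : ∀ (x : X) (m : ℕ), ‖∑ i ∈ Finset.range m, f i x • e i‖ ≤ K * ‖x‖)
    (nseq : ℕ → ℕ) (hmono : StrictMono nseq) (hn1 : 0 < nseq 0)
    (l : ℕ) (hl : 2 ≤ l) (hgaps : ∀ k, nseq (k + 1) ≤ l * nseq k)
    (C₁ C₂ : ℝ) (hC₁ : 0 < C₁) (hC₂ : 0 < C₂)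
    (hUL : ∀ (A : Finset ℕ) (hA : A.Nonempty) (a : ℕ → ℝ), (∃ k, A.card = nseq k) →
      C₁⁻¹ * (A.inf' hA fun i => |a i|) * ‖∑ i ∈ A, e i‖ ≤ ‖∑ i ∈ A, a i • e i‖ ∧
      ‖∑ i ∈ A, a i • e i‖ ≤ C₂ * (A.sup' hA fun i => |a i|) * ‖∑ i ∈ A, e i‖) :
    ∀ (A : Finset ℕ) (hA : A.Nonempty) (a : ℕ → ℝ),
      (max ((nseq 0 : ℝ) * α₁ * α₂) (K ^ 2 * C₁ + 2 * ((l : ℝ) - 1) * C₁ * K))⁻¹ *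
          (A.inf' hA fun i => |a i|) * ‖∑ i ∈ A, e i‖ ≤ ‖∑ i ∈ A, a i • e i‖ ∧
      ‖∑ i ∈ A, a i • e i‖ ≤
        max ((nseq 0 : ℝ) * α₁ * α₂) (K ^ 2 * C₂ + 2 * ((l : ℝ) - 1) * C₂ * K) *
          (A.sup' hA fun i => |a i|) * ‖∑ i ∈ A, e i‖ :=
  stmt1_general e f hbi α₁ α₂ hα₁ hα₂ K hKpos hSch nseq hmono hn1 l hgaps C₁ C₂ hC₁ hC₂ hUL
end

section
/- If a basis B is Δ-n-symmetric for largest coefficients, then B is Δ_s-n-superdemocratic with Δ_s ≤ Δ². (In particular, n-symmetry for largest coefficients implies n-superdemocracy and hence n-democracy.) -/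
open Finset

/-- If a basis is `Δ`-`n`-symmetric for largest coefficients, then it is
`n`-superdemocratic with constant at most `Δ²`. -/
theorem stmt3
    {X : Type*} [NormedAddCommGroup X] [NormedSpace ℝ X]
    (e : ℕ → X) (f : ℕ → X →L[ℝ] ℝ)
    (hbi : ∀ i j, f i (e j) = if i = j then (1 : ℝ) else 0)
    (α₁ α₂ : ℝ) (hα₁pos : 0 < α₁) (hα₂pos : 0 < α₂)
    (hα₁ : ∀ i, ‖e i‖ ≤ α₁) (hα₂ : ∀ i, ‖f i‖ ≤ α₂)
    (nseq : ℕ → ℕ) (hmono : StrictMono nseq) (hn1 : 0 < nseq 0)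
    (Δ : ℝ) (hΔ : 0 < Δ)
    (hslc : ∀ (A B : Finset ℕ) (εA εB : ℕ → ℝ) (x : X),
      A.card ≤ B.card → (∃ k, A.card = nseq k) → (∃ k, B.card = nseq k) →
      Disjoint A B →
      (∀ i ∈ A, |εA i| = 1) → (∀ i ∈ B, |εB i| = 1) →
      (∀ i, |f i x| ≤ 1) → (∀ i ∈ A ∪ B, f i x = 0) →
      ‖x + ∑ i ∈ A, εA i • e i‖ ≤ Δ * ‖x + ∑ i ∈ B, εB i • e i‖) :
    ∀ (A B : Finset ℕ) (εA εB : ℕ → ℝ),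
      A.card ≤ B.card → (∃ k, A.card = nseq k) → (∃ k, B.card = nseq k) →
      (∀ i ∈ A, |εA i| = 1) → (∀ i ∈ B, |εB i| = 1) →
      ‖∑ i ∈ A, εA i • e i‖ ≤ Δ ^ 2 * ‖∑ i ∈ B, εB i • e i‖ := by

  intro A B εA εB hcard hA hB hεA hεB
  set M := (A ∪ B).sup id with hM
  set C := (Finset.range A.card).image (fun k => M + 1 + k) with hC
  have hCcard : C.card = A.card := by
    rw [hC, Finset.card_image_of_injective _ (fun a b h => by omega)]
    simp
  have hdisj : ∀ i ∈ C, i ∉ A ∪ B := by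
    intro i hi hmem
    have h1 : i ≤ M := Finset.le_sup (f := id) hmem
    simp only [hC, Finset.mem_image, Finset.mem_range] at hi
    omega
  have hdA : Disjoint A C := Finset.disjoint_left.mpr
    (fun i hiA hiC => hdisj i hiC (Finset.mem_union_left _ hiA))
  have hdC : Disjoint C B := Finset.disjoint_left.mpr
    (fun i hiC hiB => hdisj i hiC (Finset.mem_union_right _ hiB))
  have hεC : ∀ i ∈ C, |(fun _ => (1:ℝ)) i| = 1 := by simp
  have h1 := hslc A C εA (fun _ => 1) 0 hCcard.ge hA (hCcard ▸ hA) hdA hεA hεC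
    (by simp) (by simp)
  have h2 := hslc C B (fun _ => 1) εB 0 (hCcard ▸ hcard) (hCcard ▸ hA) hB hdC hεC hεB
    (by simp) (by simp)
  simp only [zero_add] at h1 h2
  calc ‖∑ i ∈ A, εA i • e i‖ ≤ Δ * ‖∑ i ∈ C, (1:ℝ) • e i‖ := h1
    _ ≤ Δ * (Δ * ‖∑ i ∈ B, εB i • e i‖) := by
        exact mul_le_mul_of_nonneg_left h2 hΔ.le
    _ = Δ ^ 2 * ‖∑ i ∈ B, εB i • e i‖ := by ring
end

section
/- A basis B is n-symmetric for largest coefficients if and only if B is n-superdemocratic and n-quasi-greedy for largest coefficients. Moreover, the constants satisfy C_ql ≤ 1 + Δ and Δ ≤ 1 + C_ql(1 + Δ_s). -/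
open Finset

variable {X : Type*} [NormedAddCommGroup X] [NormedSpace ℝ X]

/-- `n`-symmetry for largest coefficients with constant `Δ`. -/
def NSLC (e : ℕ → X) (f : ℕ → X →L[ℝ] ℝ) (nseq : ℕ → ℕ) (Δ : ℝ) : Prop :=
  ∀ (A B : Finset ℕ) (εA εB : ℕ → ℝ) (x : X),
    A.card ≤ B.card → (∃ k, A.card = nseq k) → (∃ k, B.card = nseq k) →
    Disjoint A B →
    (∀ i ∈ A, |εA i| = 1) → (∀ i ∈ B, |εB i| = 1) →
    (∀ i, |f i x| ≤ 1) → (∀ i ∈ A ∪ B, f i x = 0) →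
    ‖x + ∑ i ∈ A, εA i • e i‖ ≤ Δ * ‖x + ∑ i ∈ B, εB i • e i‖

/-- `n`-superdemocracy with constant `Δs`. -/
def NSuperDem (e : ℕ → X) (nseq : ℕ → ℕ) (Δs : ℝ) : Prop :=
  ∀ (A B : Finset ℕ) (εA εB : ℕ → ℝ),
    A.card ≤ B.card → (∃ k, A.card = nseq k) → (∃ k, B.card = nseq k) →
    (∀ i ∈ A, |εA i| = 1) → (∀ i ∈ B, |εB i| = 1) →
    ‖∑ i ∈ A, εA i • e i‖ ≤ Δs * ‖∑ i ∈ B, εB i • e i‖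

/-- `n`-quasi-greediness for largest coefficients with constant `Cql`. -/
def NQGLC (e : ℕ → X) (f : ℕ → X →L[ℝ] ℝ) (nseq : ℕ → ℕ) (Cql : ℝ) : Prop :=
  ∀ (A : Finset ℕ) (ε : ℕ → ℝ) (x : X),
    (∃ k, A.card = nseq k) → (∀ i ∈ A, |ε i| = 1) →
    (∀ i ∈ A, f i x = 0) → (∀ i, |f i x| ≤ 1) →
    ‖∑ i ∈ A, ε i • e i‖ ≤ Cql * ‖(∑ i ∈ A, ε i • e i) + x‖

/- ### Auxiliary lemmas -/

lemma stmt4_coord_sum (e : ℕ → X) (f : ℕ → X →L[ℝ] ℝ)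
    (hbi : ∀ i j, f i (e j) = if i = j then (1:ℝ) else 0)
    (s : Finset ℕ) (c : ℕ → ℝ) (j : ℕ) :
    f j (∑ i ∈ s, c i • e i) = if j ∈ s then c j else 0 := by
  rw [map_sum]
  simp only [map_smul, hbi, smul_eq_mul, mul_ite, mul_one, mul_zero]
  exact Finset.sum_ite_eq s j c

lemma stmt4_fresh_set (n : ℕ) (S : Finset ℕ) :
    ∃ B : Finset ℕ, B.card = n ∧ Disjoint B S := by
  refine ⟨(Finset.range n).image (· + (S.sup id + 1)), ?_, ?_⟩
  · rw [Finset.card_image_of_injective _ (add_left_injective _), Finset.card_range]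
  · rw [Finset.disjoint_left]
    intro a ha haS
    simp only [Finset.mem_image, Finset.mem_range] at ha
    obtain ⟨b, _, rfl⟩ := ha
    have h := Finset.le_sup (f := id) haS
    simp only [id] at h
    omega

lemma stmt4_sum_pos_norm (e : ℕ → X) (f : ℕ → X →L[ℝ] ℝ)
    (hbi : ∀ i j, f i (e j) = if i = j then (1:ℝ) else 0)
    (A : Finset ℕ) (ε : ℕ → ℝ) (hA : A.Nonempty) (hε : ∀ i ∈ A, |ε i| = 1) :
    0 < ‖∑ i ∈ A, ε i • e i‖ := by
  obtain ⟨i₀, hi₀⟩ := hA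
  have h := stmt4_coord_sum e f hbi A ε i₀
  rw [if_pos hi₀] at h
  have hne : (∑ i ∈ A, ε i • e i) ≠ 0 := by
    intro h0
    rw [h0, map_zero] at h
    have := hε i₀ hi₀
    rw [← h] at this
    simp at this
  exact norm_pos_iff.mpr hne

lemma stmt4_small_coeff (e : ℕ → X) (f : ℕ → X →L[ℝ] ℝ)
    (hbi : ∀ i j, f i (e j) = if i = j then (1:ℝ) else 0)
    (α₂ : ℝ) (hα₂pos : 0 < α₂) (hα₂ : ∀ i, ‖f i‖ ≤ α₂)
    (hdense : Dense (↑(Submodule.span ℝ (Set.range e)) : Set X))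
    (x : X) (δ : ℝ) (hδ : 0 < δ) :
    ∃ D : Finset ℕ, ∀ i ∉ D, |f i x| ≤ δ := by
  have hx : x ∈ closure (↑(Submodule.span ℝ (Set.range e)) : Set X) := hdense x
  rw [Metric.mem_closure_iff] at hx
  obtain ⟨y, hy, hdist⟩ := hx (δ / α₂) (by positivity)
  rw [SetLike.mem_coe, Finsupp.mem_span_range_iff_exists_finsupp] at hy
  obtain ⟨c, hc⟩ := hy
  refine ⟨c.support, fun i hi => ?_⟩
  have hfy : f i y = 0 := by
    rw [← hc, Finsupp.sum, stmt4_coord_sum e f hbi c.support c i, if_neg hi]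
  have h1 : |f i x| = |f i (x - y)| := by rw [map_sub, hfy, sub_zero]
  rw [h1]
  calc |f i (x - y)| ≤ ‖f i‖ * ‖x - y‖ := (f i).le_opNorm _
    _ ≤ α₂ * (δ / α₂) := by
        apply mul_le_mul (hα₂ i) _ (norm_nonneg _) (le_of_lt hα₂pos)
        rw [← dist_eq_norm]; exact le_of_lt hdist
    _ = δ := by field_simp

lemma stmt4_key_x (e : ℕ → X) (f : ℕ → X →L[ℝ] ℝ)
    (hbi : ∀ i j, f i (e j) = if i = j then (1:ℝ) else 0)
    (α₁ α₂ : ℝ) (hα₁pos : 0 < α₁) (hα₂pos : 0 < α₂)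
    (hα₁ : ∀ i, ‖e i‖ ≤ α₁) (hα₂ : ∀ i, ‖f i‖ ≤ α₂)
    (hdense : Dense (↑(Submodule.span ℝ (Set.range e)) : Set X))
    (nseq : ℕ → ℕ) (Δ : ℝ) (hΔ : NSLC e f nseq Δ) (hΔ0 : 0 ≤ Δ)
    (A : Finset ℕ) (ε : ℕ → ℝ) (x : X)
    (hcard : ∃ k, A.card = nseq k) (hε : ∀ i ∈ A, |ε i| = 1)
    (hA0 : ∀ i ∈ A, f i x = 0) (hx1 : ∀ i, |f i x| ≤ 1) :
    ‖x‖ ≤ Δ * ‖x + ∑ i ∈ A, ε i • e i‖ := by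
  set S := ∑ i ∈ A, ε i • e i with hS
  have main : ∀ δ : ℝ, 0 < δ → ‖x‖ ≤ Δ * ‖x + S‖ + δ * ((A.card * α₁) * (1 + Δ)) := by
    intro δ hδ
    obtain ⟨D, hD⟩ := stmt4_small_coeff e f hbi α₂ hα₂pos hα₂ hdense x δ hδ
    obtain ⟨B, hBcard, hBdisj⟩ := stmt4_fresh_set A.card (A ∪ D)
    have hBA : Disjoint B A := hBdisj.mono_right Finset.subset_union_left
    have hBD : Disjoint B D := hBdisj.mono_right Finset.subset_union_right
    set P := ∑ i ∈ B, f i x • e i with hP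
    set y := x - P with hy
    have hyc : ∀ j, f j y = if j ∈ B then 0 else f j x := by
      intro j
      rw [hy, map_sub, hP, stmt4_coord_sum e f hbi B (fun i => f i x) j]
      by_cases hj : j ∈ B <;> simp [hj]
    have hy1 : ∀ i, |f i y| ≤ 1 := by
      intro i; rw [hyc i]
      by_cases hi : i ∈ B <;> simp [hi, hx1 i]
    have hyB : ∀ i ∈ B ∪ A, f i y = 0 := by
      intro i hi
      rw [hyc i]
      rcases Finset.mem_union.mp hi with h | h
      · simp [h]
      · have hiB : i ∉ B := fun hc => (Finset.disjoint_left.mp hBA) hc h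
        simp [hiB, hA0 i h]
    have hPnorm : ‖P‖ ≤ A.card * α₁ * δ := by
      calc ‖P‖ ≤ ∑ i ∈ B, ‖f i x • e i‖ := norm_sum_le _ _
        _ ≤ ∑ _i ∈ B, δ * α₁ := by
            apply Finset.sum_le_sum
            intro i hi
            rw [norm_smul, Real.norm_eq_abs]
            have hiD : i ∉ D := fun hc => (Finset.disjoint_left.mp hBD) hi hc
            exact mul_le_mul (hD i hiD) (hα₁ i) (norm_nonneg _) (le_of_lt hδ)
        _ = A.card * α₁ * δ := by
            rw [Finset.sum_const, hBcard, nsmul_eq_mul]; ring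
    set p := ∑ i ∈ B, e i with hp
    have h1 : ‖y + p‖ ≤ Δ * ‖y + S‖ := by
      have := hΔ B A (fun _ => 1) ε y (le_of_eq hBcard)
        ⟨hcard.choose, by rw [hBcard]; exact hcard.choose_spec⟩ hcard hBA
        (fun i _ => by norm_num) hε hy1 hyB
      simpa [hp] using this
    have h2 : ‖y - p‖ ≤ Δ * ‖y + S‖ := by
      have := hΔ B A (fun _ => -1) ε y (le_of_eq hBcard)
        ⟨hcard.choose, by rw [hBcard]; exact hcard.choose_spec⟩ hcard hBA
        (fun i _ => by norm_num) hε hy1 hyB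
      have hneg : ∑ i ∈ B, (-1 : ℝ) • e i = -p := by
        simp [hp, neg_smul, Finset.sum_neg_distrib]
      rw [hneg] at this
      simpa [sub_eq_add_neg] using this
    have hyy : (2:ℝ) * ‖y‖ ≤ ‖y + p‖ + ‖y - p‖ := by
      have heq : y + y = (y + p) + (y - p) := by abel
      have h3 : ‖y + y‖ ≤ ‖y + p‖ + ‖y - p‖ := heq ▸ norm_add_le _ _
      have h4 : ‖y + y‖ = 2 * ‖y‖ := by
        rw [← two_smul ℝ y, norm_smul]; norm_num
      linarith
    have hyn : ‖y‖ ≤ Δ * ‖y + S‖ := by linarith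
    have hyS : ‖y + S‖ ≤ ‖x + S‖ + ‖P‖ := by
      have heq : y + S = (x + S) - P := by rw [hy]; abel
      rw [heq]
      exact norm_sub_le _ _
    have hxy : ‖x‖ ≤ ‖y‖ + ‖P‖ := by
      have heq : x = y + P := by rw [hy]; abel
      rw [heq]; exact norm_add_le _ _
    have hmul : Δ * ‖y + S‖ ≤ Δ * (‖x + S‖ + ‖P‖) :=
      mul_le_mul_of_nonneg_left hyS hΔ0
    have hmul2 : Δ * ‖P‖ ≤ Δ * (A.card * α₁ * δ) := mul_le_mul_of_nonneg_left hPnorm hΔ0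
    nlinarith [hPnorm, hxy, hyn, hmul, hmul2]
  refine le_of_forall_pos_le_add ?_
  intro ε' hε'
  set K := (A.card : ℝ) * α₁ * (1 + Δ) with hK
  have hK0 : 0 ≤ K := by positivity
  have hδ : 0 < ε' / (K + 1) := by positivity
  have := main (ε' / (K + 1)) hδ
  have hle : (ε' / (K + 1)) * K ≤ ε' := by
    rw [div_mul_eq_mul_div, div_le_iff₀ (by positivity)]
    nlinarith
  linarith

lemma stmt4_nslc_pos (e : ℕ → X) (f : ℕ → X →L[ℝ] ℝ)
    (hbi : ∀ i j, f i (e j) = if i = j then (1:ℝ) else 0)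
    (nseq : ℕ → ℕ) (hn1 : 0 < nseq 0) (Δ : ℝ) (hΔ : NSLC e f nseq Δ) : 0 < Δ := by
  obtain ⟨B, hBcard, hBdisj⟩ := stmt4_fresh_set (nseq 0) (Finset.range (nseq 0))
  have hAcard : (Finset.range (nseq 0)).card = nseq 0 := Finset.card_range _
  have h := hΔ (Finset.range (nseq 0)) B (fun _ => 1) (fun _ => 1) 0
    (by rw [hAcard, hBcard]) ⟨0, hAcard⟩ ⟨0, hBcard⟩ hBdisj.symm
    (fun i _ => by norm_num) (fun i _ => by norm_num)
    (fun i => by simp) (fun i _ => by simp)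
  simp only [zero_add] at h
  have hApos := stmt4_sum_pos_norm e f hbi (Finset.range (nseq 0)) (fun _ => (1:ℝ))
    (Finset.nonempty_range_iff.mpr hn1.ne') (fun i _ => by norm_num)
  have hBpos := stmt4_sum_pos_norm e f hbi B (fun _ => (1:ℝ))
    (Finset.card_pos.mp (hBcard ▸ hn1)) (fun i _ => by norm_num)
  nlinarith [h, hApos, hBpos]

/-- A basis is `n`-symmetric for largest coefficients iff it is
`n`-superdemocratic and `n`-quasi-greedy for largest coefficients; moreover
`Cql ≤ 1 + Δ` and `Δ ≤ 1 + Cql (1 + Δs)`. -/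
theorem stmt4
    (e : ℕ → X) (f : ℕ → X →L[ℝ] ℝ)
    (hbi : ∀ i j, f i (e j) = if i = j then (1 : ℝ) else 0)
    (α₁ α₂ : ℝ) (hα₁pos : 0 < α₁) (hα₂pos : 0 < α₂)
    (hα₁ : ∀ i, ‖e i‖ ≤ α₁) (hα₂ : ∀ i, ‖f i‖ ≤ α₂)
    (hdense : Dense (↑(Submodule.span ℝ (Set.range e)) : Set X))
    (nseq : ℕ → ℕ) (hmono : StrictMono nseq) (hn1 : 0 < nseq 0) :
    ((∃ Δ, 0 < Δ ∧ NSLC e f nseq Δ) ↔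
      ((∃ Δs, 0 < Δs ∧ NSuperDem e nseq Δs) ∧ (∃ Cql, 0 < Cql ∧ NQGLC e f nseq Cql))) ∧
    (∀ Δ, NSLC e f nseq Δ → NQGLC e f nseq (1 + Δ)) ∧
    (∀ Cql Δs, NQGLC e f nseq Cql → NSuperDem e nseq Δs →
      NSLC e f nseq (1 + Cql * (1 + Δs))) := by
  -- Part 2 : NSLC Δ → NQGLC (1 + Δ)
  have part2 : ∀ Δ, NSLC e f nseq Δ → NQGLC e f nseq (1 + Δ) := by
    intro Δ hΔ
    have hΔ0 : 0 < Δ := stmt4_nslc_pos e f hbi nseq hn1 Δ hΔ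
    intro A ε x hcard hε hA0 hx1
    have key := stmt4_key_x e f hbi α₁ α₂ hα₁pos hα₂pos hα₁ hα₂ hdense nseq Δ hΔ hΔ0.le
      A ε x hcard hε hA0 hx1
    have hcomm : ‖x + ∑ i ∈ A, ε i • e i‖ = ‖(∑ i ∈ A, ε i • e i) + x‖ := by rw [add_comm]
    rw [hcomm] at key
    have htr : ‖∑ i ∈ A, ε i • e i‖ ≤ ‖(∑ i ∈ A, ε i • e i) + x‖ + ‖x‖ := by
      have heq : (∑ i ∈ A, ε i • e i) = ((∑ i ∈ A, ε i • e i) + x) - x := by abel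
      calc ‖∑ i ∈ A, ε i • e i‖ = ‖((∑ i ∈ A, ε i • e i) + x) - x‖ := by rw [← heq]
        _ ≤ ‖(∑ i ∈ A, ε i • e i) + x‖ + ‖x‖ := norm_sub_le _ _
    have hexp : (1 + Δ) * ‖(∑ i ∈ A, ε i • e i) + x‖ =
        ‖(∑ i ∈ A, ε i • e i) + x‖ + Δ * ‖(∑ i ∈ A, ε i • e i) + x‖ := by ring
    linarith
  -- Part 3 : NQGLC Cql ∧ NSuperDem Δs → NSLC (1 + Cql (1 + Δs))
  have part3 : ∀ Cql Δs, NQGLC e f nseq Cql → NSuperDem e nseq Δs →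
      NSLC e f nseq (1 + Cql * (1 + Δs)) := by
    intro Cql Δs hq hs A B εA εB x hle hAc hBc hdisj hεA hεB hx1 hx0
    have hAne : A.Nonempty := Finset.card_pos.mp (by
      rw [hAc.choose_spec]; exact lt_of_lt_of_le hn1 (hmono.monotone (Nat.zero_le _)))
    have hBne : B.Nonempty := Finset.card_pos.mp (by
      rw [hBc.choose_spec]; exact lt_of_lt_of_le hn1 (hmono.monotone (Nat.zero_le _)))
    have hSA := stmt4_sum_pos_norm e f hbi A εA hAne hεA
    have hSB := stmt4_sum_pos_norm e f hbi B εB hBne hεB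
    have h1 : ‖∑ i ∈ B, εB i • e i‖ ≤ Cql * ‖(∑ i ∈ B, εB i • e i) + x‖ :=
      hq B εB x hBc hεB (fun i hi => hx0 i (Finset.mem_union_right _ hi)) hx1
    have h2 : ‖∑ i ∈ A, εA i • e i‖ ≤ Δs * ‖∑ i ∈ B, εB i • e i‖ :=
      hs A B εA εB hle hAc hBc hεA hεB
    have hCql0 : 0 < Cql := by nlinarith [norm_nonneg ((∑ i ∈ B, εB i • e i) + x)]
    have hΔs0 : 0 < Δs := by nlinarith
    have hcomm : ‖(∑ i ∈ B, εB i • e i) + x‖ = ‖x + ∑ i ∈ B, εB i • e i‖ := by rw [add_comm]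
    rw [hcomm] at h1
    have htr : ‖x + ∑ i ∈ A, εA i • e i‖ ≤
        ‖x + ∑ i ∈ B, εB i • e i‖ + ‖∑ i ∈ A, εA i • e i‖ + ‖∑ i ∈ B, εB i • e i‖ := by
      have heq : x + ∑ i ∈ A, εA i • e i =
          (x + ∑ i ∈ B, εB i • e i) + ((∑ i ∈ A, εA i • e i) - ∑ i ∈ B, εB i • e i) := by abel
      calc ‖x + ∑ i ∈ A, εA i • e i‖
          = ‖(x + ∑ i ∈ B, εB i • e i) + ((∑ i ∈ A, εA i • e i) - ∑ i ∈ B, εB i • e i)‖ := by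
            rw [← heq]
        _ ≤ ‖x + ∑ i ∈ B, εB i • e i‖ + ‖(∑ i ∈ A, εA i • e i) - ∑ i ∈ B, εB i • e i‖ :=
            norm_add_le _ _
        _ ≤ ‖x + ∑ i ∈ B, εB i • e i‖ +
            (‖∑ i ∈ A, εA i • e i‖ + ‖∑ i ∈ B, εB i • e i‖) := by
            have := norm_sub_le (∑ i ∈ A, εA i • e i) (∑ i ∈ B, εB i • e i)
            linarith
        _ = ‖x + ∑ i ∈ B, εB i • e i‖ + ‖∑ i ∈ A, εA i • e i‖ + ‖∑ i ∈ B, εB i • e i‖ := by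
            ring
    have h3 : ‖∑ i ∈ A, εA i • e i‖ ≤ Δs * (Cql * ‖x + ∑ i ∈ B, εB i • e i‖) :=
      h2.trans (mul_le_mul_of_nonneg_left h1 hΔs0.le)
    have hexp : (1 + Cql * (1 + Δs)) * ‖x + ∑ i ∈ B, εB i • e i‖ =
        ‖x + ∑ i ∈ B, εB i • e i‖ + Cql * ‖x + ∑ i ∈ B, εB i • e i‖ +
        Δs * (Cql * ‖x + ∑ i ∈ B, εB i • e i‖) := by ring
    linarith
  refine ⟨?_, part2, part3⟩
  constructor
  · rintro ⟨Δ, hΔpos, h⟩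
    refine ⟨⟨Δ * Δ, mul_pos hΔpos hΔpos, ?_⟩, ⟨1 + Δ, by linarith, part2 Δ h⟩⟩
    intro A B εA εB hle hAc hBc hεA hεB
    obtain ⟨C, hCcard, hCdisj⟩ := stmt4_fresh_set B.card (A ∪ B)
    have hCA : Disjoint A C := (hCdisj.mono_right Finset.subset_union_left).symm
    have hCB : Disjoint C B := hCdisj.mono_right Finset.subset_union_right
    have hCc : ∃ k, C.card = nseq k := ⟨hBc.choose, by rw [hCcard]; exact hBc.choose_spec⟩
    have h1 := h A C εA (fun _ => 1) 0 (hle.trans (le_of_eq hCcard.symm)) hAc hCc hCA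
      hεA (fun i _ => by norm_num) (fun i => by simp) (fun i _ => by simp)
    have h2 := h C B (fun _ => 1) εB 0 (le_of_eq hCcard) hCc hBc hCB
      (fun i _ => by norm_num) hεB (fun i => by simp) (fun i _ => by simp)
    simp only [zero_add] at h1 h2
    calc ‖∑ i ∈ A, εA i • e i‖ ≤ Δ * ‖∑ i ∈ C, (1:ℝ) • e i‖ := h1
      _ ≤ Δ * (Δ * ‖∑ i ∈ B, εB i • e i‖) := mul_le_mul_of_nonneg_left h2 hΔpos.le
      _ = Δ * Δ * ‖∑ i ∈ B, εB i • e i‖ := by ring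
  · rintro ⟨⟨Δs, hΔs, hsd⟩, ⟨Cql, hCq, hqg⟩⟩
    exact ⟨1 + Cql * (1 + Δs), by nlinarith, part3 Cql Δs hqg hsd⟩
end

section
/- Let n be a sequence with l-bounded gaps. If a basis B is Δ-n-symmetric for largest coefficients, then B is C-symmetric for largest coefficients (i.e. the property holds for all cardinalities, n = ℕ) with C ≤ max{1 + 2α₁α₂n₁, 1 + 2Δ²(1 + l)}. -/
/-
If `|B| ≤ n₁`, a coordinate functional of `B` gives `1 ≤ α₂ ‖x + 1_{εB}‖`, and the trivial
bounds `‖1_{εA}‖, ‖1_{εB}‖ ≤ α₁ n₁` suffice. Otherwise `n_k ≤ |B| ≤ l n_k` for some `k`. Every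
signed indicator `1_{σC}` with `C ⊆ A ∪ B` and `|C| ≤ n_k` then has norm at most
`Δ² ‖x + 1_{εB}‖`: pad `C` with fresh indices to size `n_k`, apply `Δ`-symmetry twice (through
a fresh set, to an `n_k`-subset `T ⊆ B` containing `C ∩ B`), and average over the signs of the
padding and of `x + 1_{ε(B ∖ T)}`. Cutting `A` and `B` into at most `l` such pieces gives the
constant `1 + 2lΔ²`. Fresh indices only exist when `x` is finitely supported; the general case
follows because the inequality is closed in `x` and such vectors are dense among the admissible
ones.
-/

theorem Finset.exists_card_eq_disjoint {α : Type*} [Infinite α] (Z : Finset α) (n : ℕ) :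
    ∃ D : Finset α, D.card = n ∧ Disjoint D Z := by
  obtain ⟨D, hDZ, hD⟩ := Z.finite_toSet.infinite_compl.exists_subset_card_eq n
  exact ⟨D, hD, Finset.disjoint_left.mpr fun _ ha => hDZ ha⟩

theorem StrictMono.exists_le_lt_succ_s5 {a : ℕ → ℕ} (ha : StrictMono a) {m : ℕ} (hm : a 0 ≤ m) :
    ∃ k, a k ≤ m ∧ m < a (k + 1) := by
  by_contra! h
  have hle : ∀ k, a k ≤ m := fun k => Nat.rec hm (fun k hk => h k hk) k
  exact (hle (m + 1)).not_gt (Nat.lt_of_lt_of_le m.lt_succ_self (ha.id_le (m + 1)))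

theorem norm_le_of_forall_abs_eq_one {E : Type*} [SeminormedAddCommGroup E] [NormedSpace ℝ E]
    {a b : E} {K : ℝ} (h : ∀ s : ℝ, |s| = 1 → ‖a + s • b‖ ≤ K) : ‖a‖ ≤ K := by
  have h2 : 2 * ‖a‖ ≤ 2 * K :=
    calc 2 * ‖a‖ = ‖(2 : ℝ) • a‖ := by rw [norm_smul]; norm_num
      _ = ‖(a + (1 : ℝ) • b) + (a + (-1 : ℝ) • b)‖ := by congr 1; module
      _ ≤ ‖a + (1 : ℝ) • b‖ + ‖a + (-1 : ℝ) • b‖ := norm_add_le _ _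
      _ ≤ 2 * K := by linarith [h 1 (by norm_num), h (-1) (by norm_num)]
  linarith

theorem norm_add_le_norm_add_add {E : Type*} [SeminormedAddCommGroup E] (x a b : E) :
    ‖x + a‖ ≤ ‖x + b‖ + (‖a‖ + ‖b‖) :=
  calc ‖x + a‖ = ‖(x + b) + (a - b)‖ := by congr 1; abel
    _ ≤ ‖x + b‖ + (‖a‖ + ‖b‖) := by linarith [norm_add_le (x + b) (a - b), norm_sub_le a b]

theorem norm_sum_le_of_forall_subset_card_le {ι E : Type*} [DecidableEq ι]
    [SeminormedAddCommGroup E] (g : ι → E) {K : ℝ} {n m : ℕ} {S : Finset ι} (hS : S.card ≤ m * n)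
    (hK : ∀ C ⊆ S, C.card ≤ n → ‖∑ i ∈ C, g i‖ ≤ K) : ‖∑ i ∈ S, g i‖ ≤ m * K := by
  induction m generalizing S with
  | zero => simp [Finset.card_eq_zero.mp (Nat.le_zero.mp (by simpa using hS))]
  | succ m ih =>
    obtain ⟨C, hCS, hC⟩ := Finset.exists_subset_card_eq (min_le_right n S.card)
    have hrest : (S \ C).card ≤ m * n := by
      rw [Finset.card_sdiff_of_subset hCS, hC]
      rw [Nat.succ_mul] at hS
      omega
    calc ‖∑ i ∈ S, g i‖ = ‖∑ i ∈ S \ C, g i + ∑ i ∈ C, g i‖ := by rw [Finset.sum_sdiff hCS]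
      _ ≤ m * K + K := (norm_add_le _ _).trans <| add_le_add
          (ih hrest fun C' hC' => hK C' (hC'.trans Finset.sdiff_subset))
          (hK C hCS (hC ▸ min_le_left _ _))
      _ = (m + 1 : ℕ) * K := by push_cast; ring

theorem Finset.sum_piecewise_const_smul {ι R E : Type*} [DecidableEq ι] [Semiring R]
    [AddCommMonoid E] [Module R E] {C D : Finset ι} (hCD : Disjoint C D) (σ : ι → R) (s : R)
    (e : ι → E) :
    ∑ i ∈ C ∪ D, C.piecewise σ (fun _ => s) i • e i = ∑ i ∈ C, σ i • e i + s • ∑ i ∈ D, e i := by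
  rw [Finset.sum_union hCD, Finset.smul_sum]
  congr 1
  · exact Finset.sum_congr rfl fun i hi => by rw [Finset.piecewise_eq_of_mem _ _ _ hi]
  · exact Finset.sum_congr rfl fun i hi => by
      rw [Finset.piecewise_eq_of_notMem _ _ _ (Finset.disjoint_right.mp hCD hi)]

section Biorthogonal

variable {X : Type*} [NormedAddCommGroup X] [NormedSpace ℝ X] {e : ℕ → X} {f : ℕ → X →L[ℝ] ℝ}

theorem apply_sum_smul (hbi : ∀ i j, f i (e j) = if i = j then (1 : ℝ) else 0)
    (S : Finset ℕ) (c : ℕ → ℝ) (j : ℕ) :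
    f j (∑ i ∈ S, c i • e i) = if j ∈ S then c j else 0 := by
  simp only [map_sum, map_smul, hbi, smul_eq_mul, mul_ite, mul_one, mul_zero]
  exact Finset.sum_ite_eq S j c

theorem norm_sum_smul_le {α : ℝ} (hα : ∀ i, ‖e i‖ ≤ α) {S : Finset ℕ} {c : ℕ → ℝ}
    (hc : ∀ i ∈ S, |c i| ≤ 1) : ‖∑ i ∈ S, c i • e i‖ ≤ S.card * α := by
  refine (norm_sum_le_of_le S fun i hi => ?_).trans (by rw [Finset.sum_const, nsmul_eq_mul])
  rw [norm_smul, Real.norm_eq_abs]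
  simpa using mul_le_mul (hc i hi) (hα i) (norm_nonneg _) zero_le_one

theorem abs_apply_le {α : ℝ} (hα : ∀ i, ‖f i‖ ≤ α) (i : ℕ) (x : X) : |f i x| ≤ α * ‖x‖ :=
  ((f i).le_opNorm x).trans (mul_le_mul_of_nonneg_right (hα i) (norm_nonneg x))

theorem norm_add_sum_le_of_card_le (hbi : ∀ i j, f i (e j) = if i = j then (1 : ℝ) else 0)
    {α₁ α₂ : ℝ} (hα₁ : ∀ i, ‖e i‖ ≤ α₁) (hα₂ : ∀ i, ‖f i‖ ≤ α₂) {N : ℕ} {A B : Finset ℕ}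
    {εA εB : ℕ → ℝ} {x : X} (hAB : A.card ≤ B.card) (hBN : B.card ≤ N)
    (hεA : ∀ i ∈ A, |εA i| = 1) (hεB : ∀ i ∈ B, |εB i| = 1) (hx0 : ∀ i ∈ B, f i x = 0) :
    ‖x + ∑ i ∈ A, εA i • e i‖ ≤ (1 + 2 * α₁ * α₂ * N) * ‖x + ∑ i ∈ B, εB i • e i‖ := by
  set y := x + ∑ i ∈ B, εB i • e i
  have hα₁0 : 0 ≤ α₁ := (norm_nonneg _).trans (hα₁ 0)
  have hBy : (B.card : ℝ) ≤ N * (α₂ * ‖y‖) := by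
    rcases B.eq_empty_or_nonempty with hB | ⟨b, hb⟩
    · have hα₂0 : 0 ≤ α₂ := (norm_nonneg _).trans (hα₂ 0)
      rw [hB, Finset.card_empty, Nat.cast_zero]
      positivity
    have hfy : f b y = εB b := by simp [y, apply_sum_smul hbi, hb, hx0 b hb]
    have hone : 1 ≤ α₂ * ‖y‖ := hεB b hb ▸ hfy ▸ abs_apply_le hα₂ b y
    simpa using mul_le_mul (Nat.cast_le.mpr hBN) hone zero_le_one (Nat.cast_nonneg N)
  have hA := norm_sum_smul_le hα₁ fun i hi => (hεA i hi).le
  have hB := norm_sum_smul_le hα₁ fun i hi => (hεB i hi).le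
  have hAB' : (A.card : ℝ) * α₁ ≤ B.card * α₁ := by gcongr
  calc ‖x + ∑ i ∈ A, εA i • e i‖ ≤ ‖y‖ + (‖∑ i ∈ A, εA i • e i‖ + ‖∑ i ∈ B, εB i • e i‖) :=
        norm_add_le_norm_add_add _ _ _
    _ ≤ ‖y‖ + 2 * (B.card * α₁) := by linarith
    _ ≤ ‖y‖ + 2 * (N * (α₂ * ‖y‖) * α₁) := by gcongr
    _ = (1 + 2 * α₁ * α₂ * N) * ‖y‖ := by ring

variable (e f) in
def eraseCoords (E : Finset ℕ) : X →L[ℝ] X :=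
  ContinuousLinearMap.id ℝ X - ∑ i ∈ E, (f i).smulRight (e i)

theorem apply_eraseCoords (hbi : ∀ i j, f i (e j) = if i = j then (1 : ℝ) else 0)
    (E : Finset ℕ) (v : X) (j : ℕ) :
    f j (eraseCoords e f E v) = if j ∈ E then 0 else f j v := by
  have := apply_sum_smul hbi E (fun i => f i v) j
  simp only [eraseCoords, sub_apply, ContinuousLinearMap.id_apply, _root_.sum_apply,
    ContinuousLinearMap.smulRight_apply, map_sub, this]
  split_ifs <;> ring

theorem exists_apply_eq_zero_of_mem_span
    (hbi : ∀ i j, f i (e j) = if i = j then (1 : ℝ) else 0)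
    {v : X} (hv : v ∈ Submodule.span ℝ (Set.range e)) : ∃ S : Finset ℕ, ∀ i ∉ S, f i v = 0 := by
  obtain ⟨c, rfl⟩ := Finsupp.mem_span_range_iff_exists_finsupp.mp hv
  exact ⟨c.support, fun i hi => by simp [Finsupp.sum, apply_sum_smul hbi, hi]⟩

theorem mem_closure_setOf_finite_support
    (hbi : ∀ i j, f i (e j) = if i = j then (1 : ℝ) else 0)
    (hdense : Dense (↑(Submodule.span ℝ (Set.range e)) : Set X)) {E : Finset ℕ} {x : X}
    (hx0 : ∀ i ∈ E, f i x = 0) :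
    x ∈ closure {w | (∀ i ∈ E, f i w = 0) ∧ ∃ S : Finset ℕ, ∀ i ∉ S, f i w = 0} := by
  have hfix : eraseCoords e f E x = x := by
    have hsum : ∑ i ∈ E, f i x • e i = 0 :=
      Finset.sum_eq_zero fun i hi => by rw [hx0 i hi, zero_smul]
    simp [eraseCoords, hsum]
  have hx : x ∈ closure (eraseCoords e f E '' Submodule.span ℝ (Set.range e)) :=
    hfix ▸ mem_closure_image (eraseCoords e f E).continuous.continuousAt (hdense x)
  refine closure_mono ?_ hx
  rintro _ ⟨v, hv, rfl⟩
  obtain ⟨S, hS⟩ := exists_apply_eq_zero_of_mem_span hbi hv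
  exact ⟨fun i hi => by rw [apply_eraseCoords hbi, if_pos hi],
    S, fun i hi => by rw [apply_eraseCoords hbi, hS i hi, ite_self]⟩

theorem mem_closure_setOf_finite_support_of_abs_le_one
    (hbi : ∀ i j, f i (e j) = if i = j then (1 : ℝ) else 0) {α₂ : ℝ} (hα₂ : ∀ i, ‖f i‖ ≤ α₂)
    (hdense : Dense (↑(Submodule.span ℝ (Set.range e)) : Set X)) {E : Finset ℕ} {x : X}
    (hx1 : ∀ i, |f i x| ≤ 1) (hx0 : ∀ i ∈ E, f i x = 0) :
    x ∈ closure
      {w | (∀ i, |f i w| ≤ 1) ∧ (∀ i ∈ E, f i w = 0) ∧ ∃ S : Finset ℕ, ∀ i ∉ S, f i w = 0} := by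
  have hα₂0 : 0 ≤ α₂ := (norm_nonneg _).trans (hα₂ 0)
  have h1 : (1 : ℝ) ∈ closure (Set.Ico 0 1) := by simp [closure_Ico]
  have hx : x ∈ closure ((fun c : ℝ => c • x) '' Set.Ico 0 1) := by
    simpa using mem_closure_image (f := fun c : ℝ => c • x) (by fun_prop) h1
  refine closure_minimal ?_ isClosed_closure hx
  rintro _ ⟨c, ⟨hc0, hc1⟩, rfl⟩
  -- the coefficients of `c • x` are at most `c`, leaving room `1 - c` for the approximation
  refine Metric.mem_closure_iff.mpr fun ε hε => ?_
  have hδ : 0 < min ε ((1 - c) / (α₂ + 1)) := lt_min hε (by apply div_pos <;> linarith)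
  obtain ⟨w, ⟨hwE, hwS⟩, hw⟩ := Metric.mem_closure_iff.mp
    (mem_closure_setOf_finite_support hbi hdense (x := c • x) fun i hi => by simp [hx0 i hi]) _ hδ
  refine ⟨w, ⟨fun i => ?_, hwE, hwS⟩, hw.trans_le (min_le_left _ _)⟩
  have hdist : α₂ * ‖w - c • x‖ ≤ 1 - c := by
    rw [← dist_eq_norm, dist_comm]
    calc α₂ * dist (c • x) w ≤ (α₂ + 1) * ((1 - c) / (α₂ + 1)) := by
          gcongr
          · linarith
          · exact hw.le.trans (min_le_right _ _)
      _ = 1 - c := by field_simp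
  have hcx : |f i (c • x)| ≤ c := by
    simpa [abs_mul, abs_of_nonneg hc0] using mul_le_mul_of_nonneg_left (hx1 i) hc0
  calc |f i w| = |f i (c • x) + f i (w - c • x)| := by rw [map_sub]; ring_nf
    _ ≤ c + α₂ * ‖w - c • x‖ := (abs_add_le _ _).trans (add_le_add hcx (abs_apply_le hα₂ i _))
    _ ≤ 1 := by linarith

variable (e f) in
def SymmetricAtCard (N : ℕ) (Δ : ℝ) : Prop :=
  ∀ (A B : Finset ℕ) (εA εB : ℕ → ℝ) (x : X), A.card = N → B.card = N → Disjoint A B →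
    (∀ i ∈ A, |εA i| = 1) → (∀ i ∈ B, |εB i| = 1) →
    (∀ i, |f i x| ≤ 1) → (∀ i ∈ A ∪ B, f i x = 0) →
    ‖x + ∑ i ∈ A, εA i • e i‖ ≤ Δ * ‖x + ∑ i ∈ B, εB i • e i‖

namespace SymmetricAtCard

variable {N : ℕ} {Δ : ℝ}

theorem norm_add_sum_le_sq (hsym : SymmetricAtCard e f N Δ) (hΔ : 0 ≤ Δ) {u : X}
    (hu1 : ∀ i, |f i u| ≤ 1) {G F T : Finset ℕ} (hG : G.card = N) (hF : F.card = N)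
    (hT : T.card = N) (hGF : Disjoint G F) (hFT : Disjoint F T)
    (hu0 : ∀ i ∈ G ∪ F ∪ T, f i u = 0) {σ τ : ℕ → ℝ} (hσ : ∀ i ∈ G, |σ i| = 1)
    (hτ : ∀ i ∈ T, |τ i| = 1) :
    ‖u + ∑ i ∈ G, σ i • e i‖ ≤ Δ ^ 2 * ‖u + ∑ i ∈ T, τ i • e i‖ := by
  have hone : ∀ i ∈ F, |(fun _ => (1 : ℝ)) i| = 1 := by simp
  calc ‖u + ∑ i ∈ G, σ i • e i‖ ≤ Δ * ‖u + ∑ i ∈ F, (fun _ => (1 : ℝ)) i • e i‖ :=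
        hsym G F σ _ u hG hF hGF hσ hone hu1 fun i hi => hu0 i (Finset.mem_union_left T hi)
    _ ≤ Δ * (Δ * ‖u + ∑ i ∈ T, τ i • e i‖) := by
        gcongr
        exact hsym F T _ τ u hF hT hFT hone hτ hu1 fun i hi =>
          hu0 i (Finset.union_subset_union Finset.subset_union_right subset_rfl hi)
    _ = Δ ^ 2 * ‖u + ∑ i ∈ T, τ i • e i‖ := by ring

theorem norm_sum_le (hsym : SymmetricAtCard e f N Δ) (hΔ : 0 ≤ Δ) {u : X} (hu1 : ∀ i, |f i u| ≤ 1)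
    {S : Finset ℕ} (hS : ∀ i ∉ S, f i u = 0) {C T : Finset ℕ} (hC : C.card ≤ N)
    (hT : T.card = N) (hu0 : ∀ i ∈ C ∪ T, f i u = 0) {σ τ : ℕ → ℝ} (hσ : ∀ i ∈ C, |σ i| = 1)
    (hτ : ∀ i ∈ T, |τ i| = 1) :
    ‖∑ i ∈ C, σ i • e i‖ ≤ Δ ^ 2 * ‖u + ∑ i ∈ T, τ i • e i‖ := by
  -- `G = C ∪ D` is moved to `T` through `F`; averaging over the signs `r`, `s` isolates `∑_C`.
  obtain ⟨F, hF, hFfresh⟩ := Finset.exists_card_eq_disjoint (S ∪ C ∪ T) N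
  obtain ⟨D, hD, hDfresh⟩ := Finset.exists_card_eq_disjoint (S ∪ C ∪ T ∪ F) (N - C.card)
  simp only [Finset.disjoint_union_right] at hFfresh hDfresh
  have hbound : ∀ r s : ℝ, |r| = 1 → |s| = 1 →
      ‖∑ i ∈ C, σ i • e i + r • u + s • ∑ i ∈ D, e i‖ ≤ Δ ^ 2 * ‖u + ∑ i ∈ T, τ i • e i‖ := by
    intro r s hr hs
    have hru1 : ∀ i, |f i (r • u)| ≤ 1 := fun i => by simpa [abs_mul, hr] using hu1 i
    have hru0 : ∀ i ∈ (C ∪ D) ∪ F ∪ T, f i (r • u) = 0 := by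
      intro i hi
      simp only [map_smul, smul_eq_mul, mul_eq_zero]
      right
      simp only [Finset.mem_union] at hi
      rcases hi with ((hiC | hiD) | hiF) | hiT
      · exact hu0 i (Finset.mem_union_left _ hiC)
      · exact hS i (Finset.disjoint_left.mp hDfresh.1.1.1 hiD)
      · exact hS i (Finset.disjoint_left.mp hFfresh.1.1 hiF)
      · exact hu0 i (Finset.mem_union_right _ hiT)
    have := hsym.norm_add_sum_le_sq hΔ hru1 (G := C ∪ D) (F := F) (T := T)
      (by rw [Finset.card_union_of_disjoint hDfresh.1.1.2.symm, hD]; omega) hF hT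
      (Finset.disjoint_union_left.mpr ⟨hFfresh.1.2.symm, hDfresh.2⟩) hFfresh.2 hru0
      (σ := C.piecewise σ fun _ => s) (τ := fun i => r * τ i)
      (fun i _ => by by_cases hiC : i ∈ C <;> simp [hiC, hσ, hs])
      (fun i hi => by simp [abs_mul, hr, hτ i hi])
    have hrT : ∑ i ∈ T, (r * τ i) • e i = r • ∑ i ∈ T, τ i • e i := by
      simp only [mul_smul, Finset.smul_sum]
    rw [Finset.sum_piecewise_const_smul hDfresh.1.1.2.symm, hrT, ← smul_add, norm_smul, Real.norm_eq_abs, hr, one_mul] at this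
    calc ‖∑ i ∈ C, σ i • e i + r • u + s • ∑ i ∈ D, e i‖
        = ‖r • u + (∑ i ∈ C, σ i • e i + s • ∑ i ∈ D, e i)‖ := by congr 1; abel
      _ ≤ Δ ^ 2 * ‖u + ∑ i ∈ T, τ i • e i‖ := this
  exact norm_le_of_forall_abs_eq_one fun r hr =>
    norm_le_of_forall_abs_eq_one fun s hs => hbound r s hr hs

theorem norm_add_sum_le (hsym : SymmetricAtCard e f N Δ) (hΔ : 0 ≤ Δ)
    (hbi : ∀ i j, f i (e j) = if i = j then (1 : ℝ) else 0) {l : ℕ} {A B : Finset ℕ}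
    {εA εB : ℕ → ℝ} {x : X} (hAB : A.card ≤ B.card) (hNB : N ≤ B.card) (hBl : B.card ≤ l * N)
    (hεA : ∀ i ∈ A, |εA i| = 1) (hεB : ∀ i ∈ B, |εB i| = 1) (hx1 : ∀ i, |f i x| ≤ 1)
    (hx0 : ∀ i ∈ A ∪ B, f i x = 0) {S : Finset ℕ} (hS : ∀ i ∉ S, f i x = 0) :
    ‖x + ∑ i ∈ A, εA i • e i‖ ≤ (1 + 2 * l * Δ ^ 2) * ‖x + ∑ i ∈ B, εB i • e i‖ := by
  set y := x + ∑ i ∈ B, εB i • e i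
  have hsmall : ∀ (C : Finset ℕ) (σ : ℕ → ℝ), C ⊆ A ∪ B → C.card ≤ N → (∀ i ∈ C, |σ i| = 1) →
      ‖∑ i ∈ C, σ i • e i‖ ≤ Δ ^ 2 * ‖y‖ := by
    intro C σ hCAB hCN hσ
    obtain ⟨T, hCT, hTB, hT⟩ := Finset.exists_subsuperset_card_eq Finset.inter_subset_right
      ((Finset.card_le_card Finset.inter_subset_left).trans hCN) hNB
    set u := x + ∑ i ∈ B \ T, εB i • e i
    have hu : ∀ j, f j u = f j x + if j ∈ B \ T then εB j else 0 := fun j => by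
      simp only [u, map_add, apply_sum_smul hbi]
    have hyu : u + ∑ i ∈ T, εB i • e i = y := by
      simp only [u, y, add_assoc, Finset.sum_sdiff hTB]
    rw [← hyu]
    refine hsym.norm_sum_le hΔ (S := S ∪ B) (fun j => ?_) (fun j hj => ?_) hCN hT
      (fun j hj => ?_) hσ fun i hi => hεB i (hTB hi)
    · rw [hu]
      split_ifs with hj
      · rw [hx0 j (Finset.mem_union_right _ (Finset.mem_sdiff.mp hj).1), zero_add]
        exact (hεB j (Finset.mem_sdiff.mp hj).1).le
      · simpa using hx1 j
    · rw [Finset.mem_union, not_or] at hj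
      rw [hu, hS j hj.1, if_neg fun h => hj.2 (Finset.mem_sdiff.mp h).1, add_zero]
    · have hjT : j ∈ B \ T → False := fun h => (Finset.mem_sdiff.mp h).2 <| by
        rcases Finset.mem_union.mp hj with hjC | hjT
        · exact hCT (Finset.mem_inter.mpr ⟨hjC, (Finset.mem_sdiff.mp h).1⟩)
        · exact hjT
      have hjAB : j ∈ A ∪ B := by
        rcases Finset.mem_union.mp hj with hjC | hjT
        · exact hCAB hjC
        · exact Finset.mem_union_right _ (hTB hjT)
      rw [hu, hx0 j hjAB, if_neg hjT, add_zero]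
  have hA : ‖∑ i ∈ A, εA i • e i‖ ≤ l * (Δ ^ 2 * ‖y‖) :=
    norm_sum_le_of_forall_subset_card_le _ (hAB.trans hBl) fun C hC hCN =>
      hsmall C εA (hC.trans Finset.subset_union_left) hCN fun i hi => hεA i (hC hi)
  have hB : ‖∑ i ∈ B, εB i • e i‖ ≤ l * (Δ ^ 2 * ‖y‖) :=
    norm_sum_le_of_forall_subset_card_le _ hBl fun C hC hCN =>
      hsmall C εB (hC.trans Finset.subset_union_right) hCN fun i hi => hεB i (hC hi)
  calc ‖x + ∑ i ∈ A, εA i • e i‖ ≤ ‖y‖ + (‖∑ i ∈ A, εA i • e i‖ + ‖∑ i ∈ B, εB i • e i‖) :=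
        norm_add_le_norm_add_add _ _ _
    _ ≤ ‖y‖ + (l * (Δ ^ 2 * ‖y‖) + l * (Δ ^ 2 * ‖y‖)) := by gcongr
    _ = (1 + 2 * l * Δ ^ 2) * ‖y‖ := by ring

end SymmetricAtCard

end Biorthogonal

theorem stmt5_general
    {X : Type*} [NormedAddCommGroup X] [NormedSpace ℝ X]
    (e : ℕ → X) (f : ℕ → X →L[ℝ] ℝ)
    (hbi : ∀ i j, f i (e j) = if i = j then (1 : ℝ) else 0)
    (α₁ α₂ : ℝ)
    (hα₁ : ∀ i, ‖e i‖ ≤ α₁) (hα₂ : ∀ i, ‖f i‖ ≤ α₂)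
    (hdense : Dense (↑(Submodule.span ℝ (Set.range e)) : Set X))
    (nseq : ℕ → ℕ) (hmono : StrictMono nseq)
    (l : ℕ) (hgaps : ∀ k, nseq (k + 1) ≤ l * nseq k)
    (Δ : ℝ) (hΔ : 0 < Δ)
    (hslc : ∀ (A B : Finset ℕ) (εA εB : ℕ → ℝ) (x : X),
      A.card ≤ B.card → (∃ k, A.card = nseq k) → (∃ k, B.card = nseq k) →
      Disjoint A B →
      (∀ i ∈ A, |εA i| = 1) → (∀ i ∈ B, |εB i| = 1) →
      (∀ i, |f i x| ≤ 1) → (∀ i ∈ A ∪ B, f i x = 0) →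
      ‖x + ∑ i ∈ A, εA i • e i‖ ≤ Δ * ‖x + ∑ i ∈ B, εB i • e i‖) :
    ∀ (A B : Finset ℕ) (εA εB : ℕ → ℝ) (x : X),
      A.card ≤ B.card → Disjoint A B →
      (∀ i ∈ A, |εA i| = 1) → (∀ i ∈ B, |εB i| = 1) →
      (∀ i, |f i x| ≤ 1) → (∀ i ∈ A ∪ B, f i x = 0) →
      ‖x + ∑ i ∈ A, εA i • e i‖ ≤
        max (1 + 2 * α₁ * α₂ * (nseq 0 : ℝ)) (1 + 2 * Δ ^ 2 * (1 + (l : ℝ))) *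
          ‖x + ∑ i ∈ B, εB i • e i‖ := by
  intro A B εA εB x hAB _ hεA hεB hx1 hx0
  by_cases hsmall : B.card ≤ nseq 0
  · refine (norm_add_sum_le_of_card_le hbi hα₁ hα₂ hAB hsmall hεA hεB
      fun i hi => hx0 i (Finset.mem_union_right _ hi)).trans ?_
    gcongr
    exact le_max_left _ _
  obtain ⟨k, hk, hk1⟩ := hmono.exists_le_lt_succ_s5 (not_le.mp hsmall).le
  have hsym : SymmetricAtCard e f (nseq k) Δ := fun A B εA εB x hA hB =>
    hslc A B εA εB x (hA.trans hB.symm).le ⟨k, hA⟩ ⟨k, hB⟩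
  have hx : x ∈ {z : X | ‖z + ∑ i ∈ A, εA i • e i‖ ≤
      (1 + 2 * l * Δ ^ 2) * ‖z + ∑ i ∈ B, εB i • e i‖} :=
    closure_minimal (by
        rintro z ⟨hz1, hz0, S, hS⟩
        exact hsym.norm_add_sum_le hΔ.le hbi hAB hk (hk1.le.trans (hgaps k)) hεA hεB hz1 hz0 hS)
      (isClosed_le (by fun_prop) (by fun_prop))
      (mem_closure_setOf_finite_support_of_abs_le_one hbi hα₂ hdense hx1 hx0)
  refine hx.trans ?_
  gcongr
  exact le_max_of_le_right (by nlinarith [sq_nonneg Δ])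

/-- For a sequence with `l`-bounded gaps, `Δ`-`n`-symmetry for largest
coefficients implies symmetry for largest coefficients (for all cardinalities) with
constant `max (1 + 2α₁α₂n₁) (1 + 2Δ²(1+l))`. -/
theorem stmt5
    {X : Type*} [NormedAddCommGroup X] [NormedSpace ℝ X]
    (e : ℕ → X) (f : ℕ → X →L[ℝ] ℝ)
    (hbi : ∀ i j, f i (e j) = if i = j then (1 : ℝ) else 0)
    (α₁ α₂ : ℝ) (hα₁pos : 0 < α₁) (hα₂pos : 0 < α₂)
    (hα₁ : ∀ i, ‖e i‖ ≤ α₁) (hα₂ : ∀ i, ‖f i‖ ≤ α₂)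
    (hdense : Dense (↑(Submodule.span ℝ (Set.range e)) : Set X))
    (nseq : ℕ → ℕ) (hmono : StrictMono nseq) (hn1 : 0 < nseq 0)
    (l : ℕ) (hl : 2 ≤ l) (hgaps : ∀ k, nseq (k + 1) ≤ l * nseq k)
    (Δ : ℝ) (hΔ : 0 < Δ)
    (hslc : ∀ (A B : Finset ℕ) (εA εB : ℕ → ℝ) (x : X),
      A.card ≤ B.card → (∃ k, A.card = nseq k) → (∃ k, B.card = nseq k) →
      Disjoint A B →
      (∀ i ∈ A, |εA i| = 1) → (∀ i ∈ B, |εB i| = 1) →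
      (∀ i, |f i x| ≤ 1) → (∀ i ∈ A ∪ B, f i x = 0) →
      ‖x + ∑ i ∈ A, εA i • e i‖ ≤ Δ * ‖x + ∑ i ∈ B, εB i • e i‖) :
    ∀ (A B : Finset ℕ) (εA εB : ℕ → ℝ) (x : X),
      A.card ≤ B.card → Disjoint A B →
      (∀ i ∈ A, |εA i| = 1) → (∀ i ∈ B, |εB i| = 1) →
      (∀ i, |f i x| ≤ 1) → (∀ i ∈ A ∪ B, f i x = 0) →
      ‖x + ∑ i ∈ A, εA i • e i‖ ≤
        max (1 + 2 * α₁ * α₂ * (nseq 0 : ℝ)) (1 + 2 * Δ ^ 2 * (1 + (l : ℝ))) *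
          ‖x + ∑ i ∈ B, εB i • e i‖ :=
  stmt5_general e f hbi α₁ α₂ hα₁ hα₂ hdense nseq hmono l hgaps Δ hΔ hslc
end

section
/- Let n have l-bounded gaps and let B be a Schauder basis with basis constant K. If B is Δ_d-n-democratic, then B is democratic with constant at most max{α₁α₂n₁, Δ_d·K(l−1+K)}. If B is Δ_s-n-superdemocratic, then B is superdemocratic with constant at most max{α₁α₂n₁, l·Δ_s·K}. -/
open Finset

private lemma coord_sum' {X : Type*} [NormedAddCommGroup X] [NormedSpace ℝ X]
    (e : ℕ → X) (f : ℕ → X →L[ℝ] ℝ)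
    (hbi : ∀ i j, f i (e j) = if i = j then (1 : ℝ) else 0)
    (S : Finset ℕ) (c : ℕ → ℝ) (j : ℕ) :
    f j (∑ i ∈ S, c i • e i) = if j ∈ S then c j else 0 := by
  rw [map_sum]
  simp only [map_smul, hbi, smul_eq_mul, mul_ite, mul_one, mul_zero]
  exact Finset.sum_ite_eq S j c

private lemma proj_bound' {X : Type*} [NormedAddCommGroup X] [NormedSpace ℝ X]
    (e : ℕ → X) (f : ℕ → X →L[ℝ] ℝ)
    (hbi : ∀ i j, f i (e j) = if i = j then (1 : ℝ) else 0)
    (K : ℝ)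
    (hSch : ∀ (x : X) (m : ℕ), ‖∑ i ∈ Finset.range m, f i x • e i‖ ≤ K * ‖x‖)
    (S : Finset ℕ) (c : ℕ → ℝ) (m : ℕ) :
    ‖∑ i ∈ S.filter (· < m), c i • e i‖ ≤ K * ‖∑ i ∈ S, c i • e i‖ := by
  have he : ∑ j ∈ Finset.range m, f j (∑ i ∈ S, c i • e i) • e j
      = ∑ i ∈ S.filter (· < m), c i • e i := by
    have h1 : ∀ j ∈ Finset.range m,
        f j (∑ i ∈ S, c i • e i) • e j = if j ∈ S then c j • e j else 0 := by
      intro j _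
      rw [coord_sum' e f hbi]
      split <;> simp
    rw [Finset.sum_congr rfl h1, ← Finset.sum_filter]
    apply Finset.sum_congr ?_ fun _ _ => rfl
    ext x
    simp only [Finset.mem_filter, Finset.mem_range]
    tauto
  rw [← he]
  exact hSch _ m

private lemma exists_filter_card' (B : Finset ℕ) : ∀ N, N ≤ B.card →
    ∃ m, (B.filter (· < m)).card = N := by
  intro N
  induction N with
  | zero => exact fun _ => ⟨0, by simp⟩
  | succ N ih =>
    intro h
    obtain ⟨m, hm⟩ := ih (Nat.le_of_succ_le h)
    have hC : (B.filter (fun x => m ≤ x)).Nonempty := by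
      by_contra hne
      rw [Finset.not_nonempty_iff_eq_empty] at hne
      have hBB : B.filter (· < m) = B := by
        ext x
        simp only [Finset.mem_filter, and_iff_left_iff_imp]
        intro hx
        by_contra hlt
        have : x ∈ B.filter (fun x => m ≤ x) := by
          simp [hx, Nat.le_of_not_lt hlt]
        simp [hne] at this
      rw [hBB] at hm
      omega
    set b := (B.filter (fun x => m ≤ x)).min' hC with hb
    have hbmem := (B.filter (fun x => m ≤ x)).min'_mem hC
    rw [Finset.mem_filter] at hbmem
    refine ⟨b + 1, ?_⟩
    have hins : B.filter (· < b + 1) = insert b (B.filter (· < m)) := by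
      ext x
      simp only [Finset.mem_filter, Finset.mem_insert]
      constructor
      · rintro ⟨hxB, hxb⟩
        by_cases hxm : x < m
        · exact Or.inr ⟨hxB, hxm⟩
        · left
          have hx' : x ∈ B.filter (fun x => m ≤ x) := by
            simp [hxB, Nat.le_of_not_lt hxm]
          have := Finset.min'_le _ _ hx'
          omega
      · rintro (rfl | ⟨hxB, hxm⟩)
        · exact ⟨hbmem.1, by omega⟩
        · exact ⟨hxB, by omega⟩
    rw [hins, Finset.card_insert_of_notMem (by simp only [Finset.mem_filter]; omega), hm]

private lemma pad_set' (A : Finset ℕ) (N : ℕ) (h : A.card ≤ N) :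
    ∃ E : Finset ℕ, Disjoint A E ∧ (A ∪ E).card = N ∧
      (A ∪ E).filter (· < A.sup id + 1) = A := by
  set M := A.sup id + 1 with hM
  have hA : ∀ a ∈ A, a < M := fun a ha =>
    Nat.lt_succ_of_le (Finset.le_sup (f := id) ha)
  have hdisj : Disjoint A (Finset.Ico M (M + (N - A.card))) := by
    rw [Finset.disjoint_left]
    intro a ha hE
    have h1 := (Finset.mem_Ico.mp hE).1
    have h2 := hA a ha
    omega
  refine ⟨Finset.Ico M (M + (N - A.card)), hdisj, ?_, ?_⟩
  · rw [Finset.card_union_of_disjoint hdisj, Nat.card_Ico]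
    omega
  · ext x
    simp only [Finset.mem_filter, Finset.mem_union, Finset.mem_Ico]
    constructor
    · rintro ⟨hx | hx, hxM⟩
      · exact hx
      · omega
    · intro hx
      exact ⟨Or.inl hx, hA x hx⟩

private lemma lower' {X : Type*} [NormedAddCommGroup X] [NormedSpace ℝ X]
    (e : ℕ → X) (f : ℕ → X →L[ℝ] ℝ)
    (hbi : ∀ i j, f i (e j) = if i = j then (1 : ℝ) else 0)
    (α₂ : ℝ) (hα₂ : ∀ i, ‖f i‖ ≤ α₂)
    (B : Finset ℕ) (ε : ℕ → ℝ) (hB : B.Nonempty) (hε : ∀ i ∈ B, |ε i| = 1) :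
    1 ≤ α₂ * ‖∑ i ∈ B, ε i • e i‖ := by
  obtain ⟨i0, hi0⟩ := hB
  have h1 : f i0 (∑ i ∈ B, ε i • e i) = ε i0 := by
    rw [coord_sum' e f hbi, if_pos hi0]
  have h2 := (f i0).le_opNorm (∑ i ∈ B, ε i • e i)
  rw [h1, Real.norm_eq_abs, hε i0 hi0] at h2
  calc (1:ℝ) ≤ ‖f i0‖ * ‖∑ i ∈ B, ε i • e i‖ := h2
    _ ≤ α₂ * ‖∑ i ∈ B, ε i • e i‖ :=
        mul_le_mul_of_nonneg_right (hα₂ i0) (norm_nonneg _)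

/-- For a sequence with `l`-bounded gaps and a Schauder basis with constant
`K`: `Δd`-`n`-democracy implies democracy with constant at most
`max (α₁α₂n₁) (Δd K (l-1+K))`, and `Δs`-`n`-superdemocracy implies superdemocracy with
constant at most `max (α₁α₂n₁) (l Δs K)`. -/
theorem stmt6
    {X : Type*} [NormedAddCommGroup X] [NormedSpace ℝ X]
    (e : ℕ → X) (f : ℕ → X →L[ℝ] ℝ)
    (hbi : ∀ i j, f i (e j) = if i = j then (1 : ℝ) else 0)
    (α₁ α₂ : ℝ) (hα₁pos : 0 < α₁) (hα₂pos : 0 < α₂)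
    (hα₁ : ∀ i, ‖e i‖ ≤ α₁) (hα₂ : ∀ i, ‖f i‖ ≤ α₂)
    (K : ℝ) (hKpos : 0 < K)
    (hSch : ∀ (x : X) (m : ℕ), ‖∑ i ∈ Finset.range m, f i x • e i‖ ≤ K * ‖x‖)
    (nseq : ℕ → ℕ) (hmono : StrictMono nseq) (hn1 : 0 < nseq 0)
    (l : ℕ) (hl : 2 ≤ l) (hgaps : ∀ k, nseq (k + 1) ≤ l * nseq k)
    (Δd Δs : ℝ) (hΔd : 0 < Δd) (hΔs : 0 < Δs) :
    ((∀ (A B : Finset ℕ), A.card ≤ B.card →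
        (∃ k, A.card = nseq k) → (∃ k, B.card = nseq k) →
        ‖∑ i ∈ A, e i‖ ≤ Δd * ‖∑ i ∈ B, e i‖) →
      ∀ (A B : Finset ℕ), A.card ≤ B.card →
        ‖∑ i ∈ A, e i‖ ≤
          max (α₁ * α₂ * (nseq 0 : ℝ)) (Δd * K * ((l : ℝ) - 1 + K)) * ‖∑ i ∈ B, e i‖) ∧
    ((∀ (A B : Finset ℕ) (εA εB : ℕ → ℝ), A.card ≤ B.card →
        (∃ k, A.card = nseq k) → (∃ k, B.card = nseq k) →
        (∀ i ∈ A, |εA i| = 1) → (∀ i ∈ B, |εB i| = 1) →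
        ‖∑ i ∈ A, εA i • e i‖ ≤ Δs * ‖∑ i ∈ B, εB i • e i‖) →
      ∀ (A B : Finset ℕ) (εA εB : ℕ → ℝ), A.card ≤ B.card →
        (∀ i ∈ A, |εA i| = 1) → (∀ i ∈ B, |εB i| = 1) →
        ‖∑ i ∈ A, εA i • e i‖ ≤
          max (α₁ * α₂ * (nseq 0 : ℝ)) ((l : ℝ) * Δs * K) * ‖∑ i ∈ B, εB i • e i‖) := by
  have hK0 : (0:ℝ) ≤ K := hKpos.le
  have hΔd0 : (0:ℝ) ≤ Δd := hΔd.le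
  have hΔs0 : (0:ℝ) ≤ Δs := hΔs.le
  have hle_apply : ∀ t, t ≤ nseq t := fun t =>
    Nat.rec (Nat.zero_le _)
      (fun t ih => Nat.succ_le_of_lt (lt_of_le_of_lt ih (hmono (Nat.lt_succ_self t)))) t
  have small : ∀ (A B : Finset ℕ) (εA εB : ℕ → ℝ), A.card ≤ nseq 0 → A.card ≤ B.card →
      (∀ i ∈ A, |εA i| = 1) → (∀ i ∈ B, |εB i| = 1) →
      ‖∑ i ∈ A, εA i • e i‖ ≤ α₁ * α₂ * (nseq 0 : ℝ) * ‖∑ i ∈ B, εB i • e i‖ := by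
    intro A B εA εB hA hAB hεA hεB
    rcases A.eq_empty_or_nonempty with rfl | hAne
    · simp only [Finset.sum_empty, norm_zero]
      positivity
    · have hBne : B.Nonempty := by
        rw [← Finset.card_pos] at hAne ⊢
        omega
      have hup : ‖∑ i ∈ A, εA i • e i‖ ≤ α₁ * A.card := by
        calc ‖∑ i ∈ A, εA i • e i‖ ≤ ∑ i ∈ A, ‖εA i • e i‖ := norm_sum_le _ _
          _ ≤ ∑ i ∈ A, α₁ := by
              apply Finset.sum_le_sum
              intro i hi
              rw [norm_smul, Real.norm_eq_abs, hεA i hi, one_mul]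
              exact hα₁ i
          _ = α₁ * A.card := by rw [Finset.sum_const, nsmul_eq_mul, mul_comm]
      have hlow := lower' e f hbi α₂ hα₂ B εB hBne hεB
      calc ‖∑ i ∈ A, εA i • e i‖ ≤ α₁ * A.card := hup
        _ ≤ α₁ * (nseq 0 : ℝ) := by
            apply mul_le_mul_of_nonneg_left _ hα₁pos.le
            exact_mod_cast hA
        _ = α₁ * (nseq 0 : ℝ) * 1 := by ring
        _ ≤ α₁ * (nseq 0 : ℝ) * (α₂ * ‖∑ i ∈ B, εB i • e i‖) := by
            apply mul_le_mul_of_nonneg_left hlow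
            positivity
        _ = α₁ * α₂ * (nseq 0 : ℝ) * ‖∑ i ∈ B, εB i • e i‖ := by ring
  constructor
  · -- democracy
    intro hdem A B hAB
    by_cases hsmall : A.card ≤ nseq 0
    · have hs := small A B (fun _ => 1) (fun _ => 1) hsmall hAB (by simp) (by simp)
      simp only [one_smul] at hs
      calc ‖∑ i ∈ A, e i‖ ≤ α₁ * α₂ * (nseq 0 : ℝ) * ‖∑ i ∈ B, e i‖ := hs
        _ ≤ max (α₁ * α₂ * (nseq 0 : ℝ)) (Δd * K * ((l : ℝ) - 1 + K)) * ‖∑ i ∈ B, e i‖ :=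
            mul_le_mul_of_nonneg_right (le_max_left _ _) (norm_nonneg _)
    · push_neg at hsmall
      set k := Nat.findGreatest (fun k => nseq k ≤ A.card) A.card with hkdef
      have hk1 : nseq k ≤ A.card := Nat.findGreatest_spec (P := fun k => nseq k ≤ A.card) (Nat.zero_le _) hsmall.le
      have hk2 : A.card < nseq (k + 1) := by
        by_contra hcon
        push_neg at hcon
        have hle : k + 1 ≤ A.card := le_trans (hle_apply (k + 1)) hcon
        exact Nat.findGreatest_is_greatest (Nat.lt_succ_self k) hle hcon
      set N := nseq k with hNdef
      have hN0 : 0 < N := lt_of_lt_of_le hn1 (hmono.monotone (Nat.zero_le k))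
      have hNB : N ≤ B.card := le_trans hk1 hAB
      obtain ⟨m, hm⟩ := exists_filter_card' B N hNB
      have hB'le : ‖∑ i ∈ B.filter (· < m), e i‖ ≤ K * ‖∑ i ∈ B, e i‖ := by
        have h := proj_bound' e f hbi K hSch B (fun _ => (1:ℝ)) m
        simpa using h
      have hRB0 : (0:ℝ) ≤ ‖∑ i ∈ B, e i‖ := norm_nonneg _
      have key : ∀ j : ℕ, ∀ A' : Finset ℕ, A'.card ≤ (j + 1) * N →
          ‖∑ i ∈ A', e i‖ ≤ ((j : ℝ) * (Δd * K) + Δd * (K * K)) * ‖∑ i ∈ B, e i‖ := by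
        intro j
        induction j with
        | zero =>
          intro A' hA'
          obtain ⟨E, hdisj, hcard, hfil⟩ := pad_set' A' N (by simpa using hA')
          have hstep1 : ‖∑ i ∈ A', e i‖ ≤ K * ‖∑ i ∈ A' ∪ E, e i‖ := by
            have h := proj_bound' e f hbi K hSch (A' ∪ E) (fun _ => (1:ℝ)) (A'.sup id + 1)
            rw [hfil] at h
            simpa using h
          have hstep2 : ‖∑ i ∈ A' ∪ E, e i‖ ≤ Δd * ‖∑ i ∈ B.filter (· < m), e i‖ :=
            hdem _ _ (by rw [hcard, hm]) ⟨k, hcard⟩ ⟨k, hm⟩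
          calc ‖∑ i ∈ A', e i‖ ≤ K * ‖∑ i ∈ A' ∪ E, e i‖ := hstep1
            _ ≤ K * (Δd * ‖∑ i ∈ B.filter (· < m), e i‖) :=
                mul_le_mul_of_nonneg_left hstep2 hK0
            _ ≤ K * (Δd * (K * ‖∑ i ∈ B, e i‖)) := by
                apply mul_le_mul_of_nonneg_left _ hK0
                exact mul_le_mul_of_nonneg_left hB'le hΔd0
            _ = (((0:ℕ) : ℝ) * (Δd * K) + Δd * (K * K)) * ‖∑ i ∈ B, e i‖ := by
                push_cast
                ring
        | succ j ih =>
          intro A' hA'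
          by_cases hc : A'.card ≤ (j + 1) * N
          · calc ‖∑ i ∈ A', e i‖
                ≤ ((j : ℝ) * (Δd * K) + Δd * (K * K)) * ‖∑ i ∈ B, e i‖ := ih A' hc
              _ ≤ (((j + 1 : ℕ) : ℝ) * (Δd * K) + Δd * (K * K)) * ‖∑ i ∈ B, e i‖ := by
                  apply mul_le_mul_of_nonneg_right _ hRB0
                  push_cast
                  nlinarith [mul_nonneg hΔd0 hK0]
          · push_neg at hc
            have hNle : N ≤ A'.card :=
              le_trans (Nat.le_mul_of_pos_left N (Nat.succ_pos j)) hc.le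
            obtain ⟨A₁, hA₁sub, hA₁card⟩ := Finset.exists_subset_card_eq hNle
            have hA1bound : ‖∑ i ∈ A₁, e i‖ ≤ Δd * (K * ‖∑ i ∈ B, e i‖) := by
              calc ‖∑ i ∈ A₁, e i‖ ≤ Δd * ‖∑ i ∈ B.filter (· < m), e i‖ :=
                  hdem _ _ (by rw [hA₁card, hm]) ⟨k, hA₁card⟩ ⟨k, hm⟩
                _ ≤ Δd * (K * ‖∑ i ∈ B, e i‖) := mul_le_mul_of_nonneg_left hB'le hΔd0
            have hrest : (A' \ A₁).card ≤ (j + 1) * N := by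
              rw [Finset.card_sdiff_of_subset hA₁sub, hA₁card]
              have hmul : (j + 1 + 1) * N = (j + 1) * N + N := by ring
              omega
            calc ‖∑ i ∈ A', e i‖
                ≤ ‖∑ i ∈ A' \ A₁, e i‖ + ‖∑ i ∈ A₁, e i‖ := by
                  rw [← Finset.sum_sdiff hA₁sub]
                  exact norm_add_le _ _
              _ ≤ ((j : ℝ) * (Δd * K) + Δd * (K * K)) * ‖∑ i ∈ B, e i‖
                    + Δd * (K * ‖∑ i ∈ B, e i‖) := add_le_add (ih _ hrest) hA1bound
              _ = (((j + 1 : ℕ) : ℝ) * (Δd * K) + Δd * (K * K)) * ‖∑ i ∈ B, e i‖ := by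
                  push_cast
                  ring
      have hAcard : A.card ≤ ((l - 1) + 1) * N := by
        have h1 : nseq (k + 1) ≤ l * N := hgaps k
        have h2 : (l - 1) + 1 = l := by omega
        rw [h2]
        omega
      have hfinal := key (l - 1) A hAcard
      calc ‖∑ i ∈ A, e i‖
          ≤ (((l - 1 : ℕ) : ℝ) * (Δd * K) + Δd * (K * K)) * ‖∑ i ∈ B, e i‖ := hfinal
        _ = Δd * K * ((l : ℝ) - 1 + K) * ‖∑ i ∈ B, e i‖ := by
            have hcast : ((l - 1 : ℕ) : ℝ) = (l : ℝ) - 1 := by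
              have : (1:ℕ) ≤ l := by omega
              push_cast [Nat.cast_sub this]
              ring
            rw [hcast]
            ring
        _ ≤ max (α₁ * α₂ * (nseq 0 : ℝ)) (Δd * K * ((l : ℝ) - 1 + K)) * ‖∑ i ∈ B, e i‖ :=
            mul_le_mul_of_nonneg_right (le_max_right _ _) hRB0
  · -- superdemocracy
    intro hs A B εA εB hAB hεA hεB
    by_cases hsmall : A.card ≤ nseq 0
    · exact le_trans (small A B εA εB hsmall hAB hεA hεB)
        (mul_le_mul_of_nonneg_right (le_max_left _ _) (norm_nonneg _))
    · push_neg at hsmall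
      set k := Nat.findGreatest (fun k => nseq k ≤ A.card) A.card with hkdef
      have hk1 : nseq k ≤ A.card := Nat.findGreatest_spec (P := fun k => nseq k ≤ A.card) (Nat.zero_le _) hsmall.le
      have hk2 : A.card < nseq (k + 1) := by
        by_contra hcon
        push_neg at hcon
        have hle : k + 1 ≤ A.card := le_trans (hle_apply (k + 1)) hcon
        exact Nat.findGreatest_is_greatest (Nat.lt_succ_self k) hle hcon
      set N := nseq k with hNdef
      have hN0 : 0 < N := lt_of_lt_of_le hn1 (hmono.monotone (Nat.zero_le k))
      have hNB : N ≤ B.card := le_trans hk1 hAB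
      obtain ⟨m, hm⟩ := exists_filter_card' B N hNB
      have hB'le : ‖∑ i ∈ B.filter (· < m), εB i • e i‖ ≤ K * ‖∑ i ∈ B, εB i • e i‖ :=
        proj_bound' e f hbi K hSch B εB m
      have hεB' : ∀ i ∈ B.filter (· < m), |εB i| = 1 :=
        fun i hi => hεB i (Finset.filter_subset _ _ hi)
      have hRB0 : (0:ℝ) ≤ ‖∑ i ∈ B, εB i • e i‖ := norm_nonneg _
      have key : ∀ j : ℕ, ∀ (A' : Finset ℕ) (ε : ℕ → ℝ), A'.card ≤ (j + 1) * N →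
          (∀ i ∈ A', |ε i| = 1) →
          ‖∑ i ∈ A', ε i • e i‖ ≤ ((j : ℝ) + 1) * (Δs * K) * ‖∑ i ∈ B, εB i • e i‖ := by
        intro j
        induction j with
        | zero =>
          intro A' ε hA' hε
          obtain ⟨E, hdisj, hcard, -⟩ := pad_set' A' N (by simpa using hA')
          set εp := fun i => if i ∈ A' then ε i else (1:ℝ) with hεp
          set εm := fun i => if i ∈ A' then ε i else (-1:ℝ) with hεm
          have hsump : ∑ i ∈ A' ∪ E, εp i • e i
              = ∑ i ∈ A', ε i • e i + ∑ i ∈ E, e i := by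
            rw [Finset.sum_union hdisj]
            congr 1
            · exact Finset.sum_congr rfl fun i hi => by simp [hεp, hi]
            · refine Finset.sum_congr rfl fun i hi => ?_
              have hni : i ∉ A' := Finset.disjoint_right.mp hdisj hi
              simp [hεp, hni]
          have hsumm : ∑ i ∈ A' ∪ E, εm i • e i
              = ∑ i ∈ A', ε i • e i - ∑ i ∈ E, e i := by
            rw [Finset.sum_union hdisj]
            have h1 : ∑ i ∈ A', εm i • e i = ∑ i ∈ A', ε i • e i :=
              Finset.sum_congr rfl fun i hi => by simp [hεm, hi]
            have h2 : ∑ i ∈ E, εm i • e i = -∑ i ∈ E, e i := by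
              rw [← Finset.sum_neg_distrib]
              refine Finset.sum_congr rfl fun i hi => ?_
              have hni : i ∉ A' := Finset.disjoint_right.mp hdisj hi
              simp [hεm, hni]
            rw [h1, h2, ← sub_eq_add_neg]
          have hεpval : ∀ i ∈ A' ∪ E, |εp i| = 1 := by
            intro i _
            by_cases h : i ∈ A'
            · simp only [hεp]
              rw [if_pos h]
              exact hε i h
            · simp only [hεp]
              rw [if_neg h]
              exact abs_one
          have hεmval : ∀ i ∈ A' ∪ E, |εm i| = 1 := by
            intro i _
            by_cases h : i ∈ A'
            · simp only [hεm]
              rw [if_pos h]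
              exact hε i h
            · simp only [hεm]
              rw [if_neg h]
              simp
          have hp := hs (A' ∪ E) (B.filter (· < m)) εp εB
            (by rw [hcard, hm]) ⟨k, hcard⟩ ⟨k, hm⟩ hεpval hεB'
          have hmm := hs (A' ∪ E) (B.filter (· < m)) εm εB
            (by rw [hcard, hm]) ⟨k, hcard⟩ ⟨k, hm⟩ hεmval hεB'
          have htwo : (2:ℝ) • (∑ i ∈ A', ε i • e i)
              = (∑ i ∈ A' ∪ E, εp i • e i) + (∑ i ∈ A' ∪ E, εm i • e i) := by
            rw [hsump, hsumm, two_smul]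
            abel
          have hnorm2 : (2:ℝ) * ‖∑ i ∈ A', ε i • e i‖
              ≤ ‖∑ i ∈ A' ∪ E, εp i • e i‖ + ‖∑ i ∈ A' ∪ E, εm i • e i‖ := by
            calc (2:ℝ) * ‖∑ i ∈ A', ε i • e i‖ = ‖(2:ℝ) • ∑ i ∈ A', ε i • e i‖ := by
                  rw [norm_smul]
                  simp
              _ = ‖(∑ i ∈ A' ∪ E, εp i • e i) + (∑ i ∈ A' ∪ E, εm i • e i)‖ := by
                  rw [htwo]
              _ ≤ _ := norm_add_le _ _
          have hfin : ‖∑ i ∈ A', ε i • e i‖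
              ≤ Δs * ‖∑ i ∈ B.filter (· < m), εB i • e i‖ := by
            linarith
          calc ‖∑ i ∈ A', ε i • e i‖
              ≤ Δs * ‖∑ i ∈ B.filter (· < m), εB i • e i‖ := hfin
            _ ≤ Δs * (K * ‖∑ i ∈ B, εB i • e i‖) :=
                mul_le_mul_of_nonneg_left hB'le hΔs0
            _ = (((0:ℕ) : ℝ) + 1) * (Δs * K) * ‖∑ i ∈ B, εB i • e i‖ := by
                push_cast
                ring
        | succ j ih =>
          intro A' ε hA' hε
          by_cases hc : A'.card ≤ (j + 1) * N
          · calc ‖∑ i ∈ A', ε i • e i‖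
                ≤ ((j : ℝ) + 1) * (Δs * K) * ‖∑ i ∈ B, εB i • e i‖ := ih A' ε hc hε
              _ ≤ (((j + 1 : ℕ) : ℝ) + 1) * (Δs * K) * ‖∑ i ∈ B, εB i • e i‖ := by
                  apply mul_le_mul_of_nonneg_right _ hRB0
                  push_cast
                  nlinarith [mul_nonneg hΔs0 hK0]
          · push_neg at hc
            have hNle : N ≤ A'.card :=
              le_trans (Nat.le_mul_of_pos_left N (Nat.succ_pos j)) hc.le
            obtain ⟨A₁, hA₁sub, hA₁card⟩ := Finset.exists_subset_card_eq hNle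
            have hεA₁ : ∀ i ∈ A₁, |ε i| = 1 := fun i hi => hε i (hA₁sub hi)
            have hA1bound : ‖∑ i ∈ A₁, ε i • e i‖ ≤ Δs * (K * ‖∑ i ∈ B, εB i • e i‖) := by
              calc ‖∑ i ∈ A₁, ε i • e i‖ ≤ Δs * ‖∑ i ∈ B.filter (· < m), εB i • e i‖ :=
                  hs _ _ ε εB (by rw [hA₁card, hm]) ⟨k, hA₁card⟩ ⟨k, hm⟩ hεA₁ hεB'
                _ ≤ Δs * (K * ‖∑ i ∈ B, εB i • e i‖) :=
                    mul_le_mul_of_nonneg_left hB'le hΔs0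
            have hrest : (A' \ A₁).card ≤ (j + 1) * N := by
              rw [Finset.card_sdiff_of_subset hA₁sub, hA₁card]
              have hmul : (j + 1 + 1) * N = (j + 1) * N + N := by ring
              omega
            have hεrest : ∀ i ∈ A' \ A₁, |ε i| = 1 :=
              fun i hi => hε i (Finset.sdiff_subset hi)
            calc ‖∑ i ∈ A', ε i • e i‖
                ≤ ‖∑ i ∈ A' \ A₁, ε i • e i‖ + ‖∑ i ∈ A₁, ε i • e i‖ := by
                  rw [← Finset.sum_sdiff hA₁sub]
                  exact norm_add_le _ _
              _ ≤ ((j : ℝ) + 1) * (Δs * K) * ‖∑ i ∈ B, εB i • e i‖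
                    + Δs * (K * ‖∑ i ∈ B, εB i • e i‖) :=
                  add_le_add (ih _ ε hrest hεrest) hA1bound
              _ = (((j + 1 : ℕ) : ℝ) + 1) * (Δs * K) * ‖∑ i ∈ B, εB i • e i‖ := by
                  push_cast
                  ring
      have hAcard : A.card ≤ ((l - 1) + 1) * N := by
        have h1 : nseq (k + 1) ≤ l * N := hgaps k
        have h2 : (l - 1) + 1 = l := by omega
        rw [h2]
        omega
      have hfinal := key (l - 1) A εA hAcard hεA
      calc ‖∑ i ∈ A, εA i • e i‖
          ≤ (((l - 1 : ℕ) : ℝ) + 1) * (Δs * K) * ‖∑ i ∈ B, εB i • e i‖ := hfinal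
        _ = (l : ℝ) * Δs * K * ‖∑ i ∈ B, εB i • e i‖ := by
            have hcast : ((l - 1 : ℕ) : ℝ) = (l : ℝ) - 1 := by
              have h1 : (1:ℕ) ≤ l := by omega
              push_cast [Nat.cast_sub h1]
              ring
            rw [hcast]
            ring
        _ ≤ max (α₁ * α₂ * (nseq 0 : ℝ)) ((l : ℝ) * Δs * K) * ‖∑ i ∈ B, εB i • e i‖ :=
            mul_le_mul_of_nonneg_right (le_max_right _ _) hRB0
end

section
/- Suppose n has l-bounded gaps and B is a basis that is C_{q,t}-n-t-quasi-greedy and has the n-UL property with constants C₁, C₂. If B is Δ_d-n-democratic, then B is C-t-quasi-greedy with C ≤ max{α₁α₂n₁, C_{q,t}(1 + (l−1)C₁C₂Δ_d)}. -/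
open Finset

/-!
Sets of size at most `n₀` are handled by the triangle inequality. Otherwise pick `k` with
`n_k ≤ |A| < n_{k+1}` and let `A₁ ⊆ A` carry the `n_k` largest coefficients of `x` on `A`. Then `A₁`
is again `t`-greedy, so `‖P_{A₁} x‖ ≤ C_{q,t} ‖x‖`, and the lower UL bound turns this into
`M ‖1_{A₁}‖ ≤ C₁ C_{q,t} ‖x‖` for `M = min_{A₁} |e_i^*(x)|`. The coefficients on `A \ A₁` are at most
`M`, and `|A \ A₁| < (l - 1) n_k`, so `A \ A₁` splits into `l - 1` blocks of size at most `n_k`.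
Padding each block to a set of size exactly `n_k` and applying the upper UL bound and democracy
against `A₁` bounds each block by `C₂ Δ_d M ‖1_{A₁}‖`.
-/

def IsGreedySet {ι : Type*} (t : ℝ) (c : ι → ℝ) (A : Finset ι) : Prop :=
  ∀ i ∈ A, ∀ j ∉ A, t * |c j| ≤ |c i|

theorem IsGreedySet.of_subset_of_forall_le {ι : Type*} {t : ℝ} {c : ι → ℝ} {A B : Finset ι}
    (hA : IsGreedySet t c A) (ht : t ≤ 1) (hBA : B ⊆ A)
    (htop : ∀ i ∈ B, ∀ j ∈ A, j ∉ B → |c j| ≤ |c i|) : IsGreedySet t c B := by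
  intro i hi j hj
  by_cases hjA : j ∈ A
  · exact (mul_le_of_le_one_left (abs_nonneg _) ht).trans (htop i hi j hjA hj)
  · exact hA i (hBA hi) j hjA

theorem Finset.exists_subset_card_eq_forall_le {α β : Type*} [DecidableEq α] [LinearOrder β]
    (g : α → β) (A : Finset α) {s : ℕ} (hs : s ≤ #A) :
    ∃ B ⊆ A, #B = s ∧ ∀ i ∈ B, ∀ j ∈ A, j ∉ B → g j ≤ g i := by
  induction s with
  | zero => exact ⟨∅, empty_subset _, rfl, by simp⟩
  | succ s ih =>
    obtain ⟨B, hBA, hBcard, hB⟩ := ih (Nat.le_of_succ_le hs)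
    have hne : (A \ B).Nonempty := by
      rw [← card_pos, card_sdiff_of_subset hBA]
      omega
    obtain ⟨j₀, hj₀, hmax⟩ := exists_max_image (A \ B) g hne
    rw [mem_sdiff] at hj₀
    refine ⟨insert j₀ B, insert_subset hj₀.1 hBA, by rw [card_insert_of_notMem hj₀.2, hBcard], ?_⟩
    intro i hi j hjA hjB
    rw [mem_insert, not_or] at hjB
    rcases mem_insert.mp hi with rfl | hiB
    · exact hmax j (mem_sdiff.mpr ⟨hjA, hjB.2⟩)
    · exact hB i hiB j hjA hjB.2

theorem norm_sum_le_mul_of_forall_subset {α E : Type*} [DecidableEq α] [SeminormedAddCommGroup E]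
    (v : α → E) {m : ℕ} {D : ℝ} (q : ℕ) (U : Finset α) (hU : #U ≤ q * m)
    (hblock : ∀ S ⊆ U, #S ≤ m → ‖∑ i ∈ S, v i‖ ≤ D) : ‖∑ i ∈ U, v i‖ ≤ q * D := by
  induction q generalizing U with
  | zero => simp [card_eq_zero.mp (Nat.le_zero.mp (by simpa using hU))]
  | succ q ih =>
    obtain ⟨S, hSU, hS⟩ := exists_subset_card_eq (min_le_left #U m)
    have hrest : #(U \ S) ≤ q * m := by
      rw [card_sdiff_of_subset hSU, hS, Nat.succ_mul] at *
      omega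
    calc ‖∑ i ∈ U, v i‖ = ‖∑ i ∈ U \ S, v i + ∑ i ∈ S, v i‖ := by rw [sum_sdiff hSU]
      _ ≤ ‖∑ i ∈ U \ S, v i‖ + ‖∑ i ∈ S, v i‖ := norm_add_le _ _
      _ ≤ q * D + D :=
        add_le_add (ih _ hrest fun S' hS' => hblock S' (hS'.trans sdiff_subset))
          (hblock S hSU (hS ▸ min_le_right _ _))
      _ = (q + 1 : ℕ) * D := by push_cast; ring

theorem norm_sum_smul_le_of_card_le_mul {ι X : Type*} [DecidableEq ι] [Infinite ι]
    [SeminormedAddCommGroup X] [Module ℝ X] (e : ι → X) {N : ℕ} (hN : 0 < N) {C M R : ℝ}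
    (hC : 0 ≤ C) (hM : 0 ≤ M)
    (hUL : ∀ (T : Finset ι) (hT : T.Nonempty) (a : ι → ℝ), #T = N →
      ‖∑ i ∈ T, a i • e i‖ ≤ C * (T.sup' hT fun i => |a i|) * ‖∑ i ∈ T, e i‖)
    (hdem : ∀ T : Finset ι, #T = N → ‖∑ i ∈ T, e i‖ ≤ R)
    {q : ℕ} {U : Finset ι} (hU : #U ≤ q * N) {a : ι → ℝ} (ha : ∀ i ∈ U, |a i| ≤ M) :
    ‖∑ i ∈ U, a i • e i‖ ≤ q * (C * M * R) := by
  refine norm_sum_le_mul_of_forall_subset _ q U hU fun S hSU hS => ?_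
  obtain ⟨T, hST, hT⟩ := Infinite.exists_superset_card_eq S N hS
  have hTne : T.Nonempty := card_pos.mp (hT ▸ hN)
  set b : ι → ℝ := fun i => if i ∈ S then a i else 0
  have hsum : ∑ i ∈ T, b i • e i = ∑ i ∈ S, a i • e i := by
    simp only [b, ite_smul, zero_smul, sum_ite_mem, inter_eq_right.mpr hST]
  have hb : (T.sup' hTne fun i => |b i|) ≤ M :=
    sup'_le _ _ fun i _ => by by_cases hi : i ∈ S <;> simp [b, hi, ha i (hSU _), hM]
  calc ‖∑ i ∈ S, a i • e i‖ = ‖∑ i ∈ T, b i • e i‖ := by rw [hsum]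
    _ ≤ C * (T.sup' hTne fun i => |b i|) * ‖∑ i ∈ T, e i‖ := hUL T hTne b hT
    _ ≤ C * M * R := by gcongr; exact hdem T hT

theorem norm_sum_coeff_smul_le_card_mul {ι X : Type*} [SeminormedAddCommGroup X]
    [NormedSpace ℝ X] (e : ι → X) (f : ι → X →L[ℝ] ℝ) {α₁ α₂ : ℝ}
    (hα₁ : ∀ i, ‖e i‖ ≤ α₁) (hα₂ : ∀ i, ‖f i‖ ≤ α₂) (x : X) (A : Finset ι) :
    ‖∑ i ∈ A, f i x • e i‖ ≤ #A * (α₁ * α₂ * ‖x‖) := by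
  have hterm : ∀ i ∈ A, ‖f i x • e i‖ ≤ α₁ * α₂ * ‖x‖ := fun i _ => by
    rw [norm_smul, mul_comm, mul_assoc]
    exact mul_le_mul (hα₁ i) ((f i).le_of_opNorm_le (hα₂ i) x) (norm_nonneg _)
      ((norm_nonneg _).trans (hα₁ i))
  calc ‖∑ i ∈ A, f i x • e i‖ ≤ ∑ i ∈ A, ‖f i x • e i‖ := norm_sum_le _ _
    _ ≤ #A • (α₁ * α₂ * ‖x‖) := sum_le_card_nsmul A _ _ hterm
    _ = #A * (α₁ * α₂ * ‖x‖) := nsmul_eq_mul _ _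

theorem stmt8_general
    {X : Type*} [NormedAddCommGroup X] [NormedSpace ℝ X]
    (e : ℕ → X) (f : ℕ → X →L[ℝ] ℝ)
    (α₁ α₂ : ℝ) (hα₁pos : 0 < α₁) (hα₂pos : 0 < α₂)
    (hα₁ : ∀ i, ‖e i‖ ≤ α₁) (hα₂ : ∀ i, ‖f i‖ ≤ α₂)
    (nseq : ℕ → ℕ) (hmono : StrictMono nseq) (hn1 : 0 < nseq 0)
    (l : ℕ) (hl : 2 ≤ l) (hgaps : ∀ k, nseq (k + 1) ≤ l * nseq k)
    (t : ℝ) (ht1 : t ≤ 1)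
    (Cqt : ℝ)
    (hqg : ∀ (x : X) (A : Finset ℕ), (∃ k, A.card = nseq k) →
      (∀ i ∈ A, ∀ j ∉ A, t * |f j x| ≤ |f i x|) →
      ‖∑ i ∈ A, f i x • e i‖ ≤ Cqt * ‖x‖)
    (C₁ C₂ : ℝ) (hC₁ : 0 < C₁) (hC₂ : 0 < C₂)
    (hUL : ∀ (A : Finset ℕ) (hA : A.Nonempty) (a : ℕ → ℝ), (∃ k, A.card = nseq k) →
      C₁⁻¹ * (A.inf' hA fun i => |a i|) * ‖∑ i ∈ A, e i‖ ≤ ‖∑ i ∈ A, a i • e i‖ ∧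
      ‖∑ i ∈ A, a i • e i‖ ≤ C₂ * (A.sup' hA fun i => |a i|) * ‖∑ i ∈ A, e i‖)
    (Δd : ℝ) (hΔd : 0 < Δd)
    (hdem : ∀ (A B : Finset ℕ), A.card ≤ B.card →
      (∃ k, A.card = nseq k) → (∃ k, B.card = nseq k) →
      ‖∑ i ∈ A, e i‖ ≤ Δd * ‖∑ i ∈ B, e i‖) :
    ∀ (x : X) (A : Finset ℕ),
      (∀ i ∈ A, ∀ j ∉ A, t * |f j x| ≤ |f i x|) →
      ‖∑ i ∈ A, f i x • e i‖ ≤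
        max (α₁ * α₂ * (nseq 0 : ℝ)) (Cqt * (1 + ((l : ℝ) - 1) * C₁ * C₂ * Δd)) * ‖x‖ := by
  intro x A hA
  rcases le_or_gt #A (nseq 0) with hsmall | hlarge
  · calc ‖∑ i ∈ A, f i x • e i‖ ≤ #A * (α₁ * α₂ * ‖x‖) :=
          norm_sum_coeff_smul_le_card_mul e f hα₁ hα₂ x A
      _ ≤ nseq 0 * (α₁ * α₂ * ‖x‖) := by gcongr
      _ = α₁ * α₂ * nseq 0 * ‖x‖ := by ring
      _ ≤ _ := by gcongr; exact le_max_left _ _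
  obtain ⟨k, hk, hk'⟩ := hmono.exists_between_of_tendsto_atTop hmono.tendsto_atTop
    (Nat.lt_succ_of_lt hlarge)
  set N := nseq k
  have hN : 0 < N := hn1.trans_le (hmono.monotone k.zero_le)
  obtain ⟨A₁, hA₁A, hA₁, htop⟩ :=
    exists_subset_card_eq_forall_le (fun i => |f i x|) A (Nat.lt_succ_iff.mp hk)
  have hA₁ne : A₁.Nonempty := card_pos.mp (hA₁ ▸ hN)
  set M := A₁.inf' hA₁ne fun i => |f i x|
  have hgreedy : ‖∑ i ∈ A₁, f i x • e i‖ ≤ Cqt * ‖x‖ :=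
    hqg x A₁ ⟨k, hA₁⟩ (IsGreedySet.of_subset_of_forall_le hA ht1 hA₁A htop)
  have hlower : M * ‖∑ i ∈ A₁, e i‖ ≤ C₁ * (Cqt * ‖x‖) := by
    have h := (hUL A₁ hA₁ne (fun i => f i x) ⟨k, hA₁⟩).1
    rw [mul_assoc, inv_mul_le_iff₀ hC₁] at h
    exact h.trans (by gcongr)
  have hcard : #(A \ A₁) ≤ (l - 1) * N := by
    have hgap : nseq (k + 1) ≤ l * N := hgaps k
    rw [card_sdiff_of_subset hA₁A, hA₁, Nat.sub_one_mul]
    omega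
  have hrest : ‖∑ i ∈ A \ A₁, f i x • e i‖ ≤ (l - 1 : ℕ) * (C₂ * M * (Δd * ‖∑ i ∈ A₁, e i‖)) :=
    norm_sum_smul_le_of_card_le_mul e hN hC₂.le (le_inf' _ _ fun i _ => abs_nonneg _)
      (fun T hT a hTN => (hUL T hT a ⟨k, hTN⟩).2)
      (fun T hTN => hdem T A₁ (by omega) ⟨k, hTN⟩ ⟨k, hA₁⟩) hcard fun i hi =>
      le_inf' _ _ fun j hj => htop j hj i (mem_sdiff.mp hi).1 (mem_sdiff.mp hi).2
  have hl1 : (0 : ℝ) ≤ (l : ℝ) - 1 := sub_nonneg.mpr (by exact_mod_cast (by omega : 1 ≤ l))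
  calc ‖∑ i ∈ A, f i x • e i‖ = ‖∑ i ∈ A \ A₁, f i x • e i + ∑ i ∈ A₁, f i x • e i‖ := by
        rw [sum_sdiff hA₁A]
    _ ≤ ‖∑ i ∈ A \ A₁, f i x • e i‖ + ‖∑ i ∈ A₁, f i x • e i‖ := norm_add_le _ _
    _ ≤ ((l : ℝ) - 1) * C₂ * Δd * (M * ‖∑ i ∈ A₁, e i‖) + Cqt * ‖x‖ := by
        refine (add_le_add hrest hgreedy).trans_eq ?_
        rw [Nat.cast_sub (by omega)]
        push_cast
        ring
    _ ≤ ((l : ℝ) - 1) * C₂ * Δd * (C₁ * (Cqt * ‖x‖)) + Cqt * ‖x‖ := by gcongr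
    _ = Cqt * (1 + ((l : ℝ) - 1) * C₁ * C₂ * Δd) * ‖x‖ := by ring
    _ ≤ _ := by gcongr; exact le_max_right _ _

/-- For a sequence with `l`-bounded gaps, a basis that is
`Cqt`-`n`-`t`-quasi-greedy, has the `n`-UL property with constants `C₁, C₂`, and is
`Δd`-`n`-democratic, is `t`-quasi-greedy with constant at most
`max (α₁α₂n₁) (Cqt(1+(l-1)C₁C₂Δd))`. -/
theorem stmt8
    {X : Type*} [NormedAddCommGroup X] [NormedSpace ℝ X]
    (e : ℕ → X) (f : ℕ → X →L[ℝ] ℝ)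
    (hbi : ∀ i j, f i (e j) = if i = j then (1 : ℝ) else 0)
    (α₁ α₂ : ℝ) (hα₁pos : 0 < α₁) (hα₂pos : 0 < α₂)
    (hα₁ : ∀ i, ‖e i‖ ≤ α₁) (hα₂ : ∀ i, ‖f i‖ ≤ α₂)
    (nseq : ℕ → ℕ) (hmono : StrictMono nseq) (hn1 : 0 < nseq 0)
    (l : ℕ) (hl : 2 ≤ l) (hgaps : ∀ k, nseq (k + 1) ≤ l * nseq k)
    (t : ℝ) (ht0 : 0 < t) (ht1 : t ≤ 1)
    (Cqt : ℝ) (hCqt : 0 < Cqt)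
    (hqg : ∀ (x : X) (A : Finset ℕ), (∃ k, A.card = nseq k) →
      (∀ i ∈ A, ∀ j ∉ A, t * |f j x| ≤ |f i x|) →
      ‖∑ i ∈ A, f i x • e i‖ ≤ Cqt * ‖x‖)
    (C₁ C₂ : ℝ) (hC₁ : 0 < C₁) (hC₂ : 0 < C₂)
    (hUL : ∀ (A : Finset ℕ) (hA : A.Nonempty) (a : ℕ → ℝ), (∃ k, A.card = nseq k) →
      C₁⁻¹ * (A.inf' hA fun i => |a i|) * ‖∑ i ∈ A, e i‖ ≤ ‖∑ i ∈ A, a i • e i‖ ∧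
      ‖∑ i ∈ A, a i • e i‖ ≤ C₂ * (A.sup' hA fun i => |a i|) * ‖∑ i ∈ A, e i‖)
    (Δd : ℝ) (hΔd : 0 < Δd)
    (hdem : ∀ (A B : Finset ℕ), A.card ≤ B.card →
      (∃ k, A.card = nseq k) → (∃ k, B.card = nseq k) →
      ‖∑ i ∈ A, e i‖ ≤ Δd * ‖∑ i ∈ B, e i‖) :
    ∀ (x : X) (A : Finset ℕ),
      (∀ i ∈ A, ∀ j ∉ A, t * |f j x| ≤ |f i x|) →
      ‖∑ i ∈ A, f i x • e i‖ ≤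
        max (α₁ * α₂ * (nseq 0 : ℝ)) (Cqt * (1 + ((l : ℝ) - 1) * C₁ * C₂ * Δd)) * ‖x‖ :=
  stmt8_general e f α₁ α₂ hα₁pos hα₂pos hα₁ hα₂ nseq hmono hn1 l hl hgaps t ht1 Cqt hqg C₁ C₂ hC₁
    hC₂ hUL Δd hΔd hdem
end

section
/- Let B be a basis with fundamental functions φ (of B) and φ* (of the dual system B*). If B is a t-greedy set for x* ∈ Y (the closed span of B* in X*), then for every finite A ⊂ ℕ and every x ∈ X: |(x* − P_B x*)(P_A x)| ≤ t⁻¹ φ*(|A|) φ(|B|) |B|⁻¹ ‖x‖ ‖x*‖. -/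
open Finset

/-!
Biorthogonality gives `(x* - P_B x*)(P_A x) = ∑_{j ∈ A \ B} e_j*(x) x*(e_j)`. Testing `x*` and `x`
against suitable sign combinations bounds `∑_{i ∈ B} |x*(e_i)|` by `φ(|B|) ‖x*‖` and
`∑_{j ∈ A} |e_j*(x)|` by `φ*(|A|) ‖x‖`. The first bound and the greedy condition make every
coefficient `|x*(e_j)|` with `j ∉ B` at most `t⁻¹ φ(|B|) |B|⁻¹ ‖x*‖`, and the estimate follows.
-/

section FundamentalMajorant

variable {ι E : Type*} [NormedAddCommGroup E] [NormedSpace ℝ E]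

/-- `φ` dominates the fundamental function `m ↦ sup {‖∑ i ∈ S, ε i • v i‖ : #S ≤ m, |ε| = 1}`. -/
def FundamentalMajorant (v : ι → E) (φ : ℕ → ℝ) : Prop :=
  ∀ (m : ℕ) (S : Finset ι) (ε : ι → ℝ), S.card ≤ m → (∀ i ∈ S, |ε i| = 1) →
    ‖∑ i ∈ S, ε i • v i‖ ≤ φ m

theorem exists_sign_sum_abs_eq (L : E →ₗ[ℝ] ℝ) (v : ι → E) (S : Finset ι) :
    ∃ ε : ι → ℝ, (∀ i ∈ S, |ε i| = 1) ∧ ∑ i ∈ S, |L (v i)| = L (∑ i ∈ S, ε i • v i) := by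
  refine ⟨fun i => if 0 ≤ L (v i) then 1 else -1, fun i _ => by dsimp only; split_ifs <;> simp, ?_⟩
  rw [map_sum]
  refine sum_congr rfl fun i _ => ?_
  dsimp only
  split_ifs with h
  · simp [abs_of_nonneg h]
  · simp [abs_of_neg (not_le.mp h)]

namespace FundamentalMajorant

variable {v : ι → E} {φ : ℕ → ℝ}

theorem nonneg (hφ : FundamentalMajorant v φ) (m : ℕ) : 0 ≤ φ m := by
  simpa using hφ m ∅ 0 (Nat.zero_le m) (by simp)

theorem sum_abs_apply_le (hφ : FundamentalMajorant v φ) (L : E →L[ℝ] ℝ) (S : Finset ι) :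
    ∑ i ∈ S, |L (v i)| ≤ φ S.card * ‖L‖ := by
  obtain ⟨ε, hε, hsum⟩ := exists_sign_sum_abs_eq L.toLinearMap v S
  calc ∑ i ∈ S, |L (v i)| = L (∑ i ∈ S, ε i • v i) := hsum
    _ ≤ ‖L‖ * ‖∑ i ∈ S, ε i • v i‖ := (le_abs_self _).trans (L.le_opNorm _)
    _ ≤ ‖L‖ * φ S.card := by gcongr; exact hφ _ S ε le_rfl hε
    _ = φ S.card * ‖L‖ := mul_comm _ _

theorem sum_abs_apply_le_of_dual {f : ι → E →L[ℝ] ℝ} (hφ : FundamentalMajorant f φ) (x : E)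
    (S : Finset ι) : ∑ i ∈ S, |f i x| ≤ φ S.card * ‖x‖ :=
  calc ∑ i ∈ S, |f i x| = ∑ i ∈ S, |NormedSpace.inclusionInDoubleDual ℝ E x (f i)| := rfl
    _ ≤ φ S.card * ‖NormedSpace.inclusionInDoubleDual ℝ E x‖ := hφ.sum_abs_apply_le _ S
    _ ≤ φ S.card * ‖x‖ := by
      gcongr
      · exact hφ.nonneg _
      · exact NormedSpace.double_dual_bound ℝ E x

theorem abs_apply_le_of_greedy (hφ : FundamentalMajorant v φ) (g : E →L[ℝ] ℝ)
    {B : Finset ι} (hB : B.Nonempty) {t : ℝ} (ht : 0 < t)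
    (hgreedy : ∀ i ∈ B, ∀ j ∉ B, t * |g (v j)| ≤ |g (v i)|) {j : ι} (hj : j ∉ B) :
    |g (v j)| ≤ t⁻¹ * φ B.card * (B.card : ℝ)⁻¹ * ‖g‖ := by
  have hcard : (0 : ℝ) < B.card := by exact_mod_cast hB.card_pos
  have hsum : B.card * (t * |g (v j)|) ≤ φ B.card * ‖g‖ :=
    calc B.card * (t * |g (v j)|) = ∑ _i ∈ B, t * |g (v j)| := by rw [sum_const, nsmul_eq_mul]
      _ ≤ ∑ i ∈ B, |g (v i)| := sum_le_sum fun i hi => hgreedy i hi j hj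
      _ ≤ φ B.card * ‖g‖ := hφ.sum_abs_apply_le g B
  rw [show t⁻¹ * φ B.card * (B.card : ℝ)⁻¹ * ‖g‖ = φ B.card * ‖g‖ / (B.card * t) by
    field_simp, le_div_iff₀ (by positivity)]
  linarith

end FundamentalMajorant

end FundamentalMajorant

theorem sub_sum_apply_sum_eq_sum_sdiff {ι X : Type*} [NormedAddCommGroup X] [NormedSpace ℝ X]
    [DecidableEq ι] {e : ι → X} {f : ι → X →L[ℝ] ℝ}
    (hbi : ∀ i j, f i (e j) = if i = j then (1 : ℝ) else 0)
    (g : X →L[ℝ] ℝ) (A B : Finset ι) (x : X) :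
    (g - ∑ i ∈ B, g (e i) • f i) (∑ j ∈ A, f j x • e j) = ∑ j ∈ A \ B, f j x * g (e j) := by
  have hcoord : ∀ j, (g - ∑ i ∈ B, g (e i) • f i) (e j) = if j ∈ B then 0 else g (e j) := by
    intro j
    simp only [sub_apply, _root_.sum_apply, smul_apply, hbi, smul_eq_mul, mul_ite, mul_one,
      mul_zero, sum_ite_eq']
    split_ifs <;> simp only [sub_self, sub_zero]
  simp only [map_sum, map_smul, hcoord, smul_eq_mul, mul_ite, mul_zero, sum_ite, sdiff_eq_filter,
    sum_const_zero, zero_add]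

theorem stmt9_general
    {X : Type*} [NormedAddCommGroup X] [NormedSpace ℝ X]
    (e : ℕ → X) (f : ℕ → X →L[ℝ] ℝ)
    (hbi : ∀ i j, f i (e j) = if i = j then (1 : ℝ) else 0)
    (φ φs : ℕ → ℝ)
    (hφ : ∀ (m : ℕ) (S : Finset ℕ) (ε : ℕ → ℝ), S.card ≤ m → (∀ i ∈ S, |ε i| = 1) →
      ‖∑ i ∈ S, ε i • e i‖ ≤ φ m)
    (hφs : ∀ (m : ℕ) (S : Finset ℕ) (ε : ℕ → ℝ), S.card ≤ m → (∀ i ∈ S, |ε i| = 1) →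
      ‖∑ i ∈ S, ε i • f i‖ ≤ φs m)
    (t : ℝ) (ht0 : 0 < t)
    (g : X →L[ℝ] ℝ)
    (B : Finset ℕ) (hB : B.Nonempty)
    (hgreedy : ∀ i ∈ B, ∀ j ∉ B, t * |g (e j)| ≤ |g (e i)|) :
    ∀ (A : Finset ℕ) (x : X),
      |(g - ∑ i ∈ B, g (e i) • f i) (∑ i ∈ A, f i x • e i)| ≤
        t⁻¹ * φs A.card * φ B.card * ((B.card : ℝ))⁻¹ * ‖x‖ * ‖g‖ := by
  intro A x
  set M := t⁻¹ * φ B.card * (B.card : ℝ)⁻¹ * ‖g‖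
  have hM : 0 ≤ M := by
    have := FundamentalMajorant.nonneg hφ B.card
    positivity
  have hcoeff : ∀ j ∈ A \ B, |f j x * g (e j)| ≤ |f j x| * M := fun j hj => by
    rw [abs_mul]
    gcongr
    exact FundamentalMajorant.abs_apply_le_of_greedy hφ g hB ht0 hgreedy (mem_sdiff.mp hj).2
  rw [sub_sum_apply_sum_eq_sum_sdiff hbi]
  calc |∑ j ∈ A \ B, f j x * g (e j)|
      ≤ ∑ j ∈ A \ B, |f j x| * M := (abs_sum_le_sum_abs _ _).trans (sum_le_sum hcoeff)
    _ ≤ ∑ j ∈ A, |f j x| * M :=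
        sum_le_sum_of_subset_of_nonneg sdiff_subset fun _ _ _ => by positivity
    _ = (∑ j ∈ A, |f j x|) * M := (sum_mul _ _ _).symm
    _ ≤ φs A.card * ‖x‖ * M := by
        gcongr; exact FundamentalMajorant.sum_abs_apply_le_of_dual hφs x A
    _ = t⁻¹ * φs A.card * φ B.card * ((B.card : ℝ))⁻¹ * ‖x‖ * ‖g‖ := by ring

/-- If `B` is a `t`-greedy set for `x*` in the closed span of the dual
functionals, then for every finite `A` and every `x ∈ X`,
`|(x* − P_B x*)(P_A x)| ≤ t⁻¹ φ*(|A|) φ(|B|) |B|⁻¹ ‖x‖ ‖x*‖`, where `φ, φ*` are the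
fundamental functions (formalized as arbitrary upper-bound functions for the norms of
signed indicator sums). -/
theorem stmt9
    {X : Type*} [NormedAddCommGroup X] [NormedSpace ℝ X]
    (e : ℕ → X) (f : ℕ → X →L[ℝ] ℝ)
    (hbi : ∀ i j, f i (e j) = if i = j then (1 : ℝ) else 0)
    (α₁ α₂ : ℝ) (hα₁pos : 0 < α₁) (hα₂pos : 0 < α₂)
    (hα₁ : ∀ i, ‖e i‖ ≤ α₁) (hα₂ : ∀ i, ‖f i‖ ≤ α₂)
    (φ φs : ℕ → ℝ)
    (hφ : ∀ (m : ℕ) (S : Finset ℕ) (ε : ℕ → ℝ), S.card ≤ m → (∀ i ∈ S, |ε i| = 1) →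
      ‖∑ i ∈ S, ε i • e i‖ ≤ φ m)
    (hφs : ∀ (m : ℕ) (S : Finset ℕ) (ε : ℕ → ℝ), S.card ≤ m → (∀ i ∈ S, |ε i| = 1) →
      ‖∑ i ∈ S, ε i • f i‖ ≤ φs m)
    (t : ℝ) (ht0 : 0 < t) (ht1 : t ≤ 1)
    (g : X →L[ℝ] ℝ)
    (hg : g ∈ closure (↑(Submodule.span ℝ (Set.range f)) : Set (X →L[ℝ] ℝ)))
    (B : Finset ℕ) (hB : B.Nonempty)
    (hgreedy : ∀ i ∈ B, ∀ j ∉ B, t * |g (e j)| ≤ |g (e i)|) :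
    ∀ (A : Finset ℕ) (x : X),
      |(g - ∑ i ∈ B, g (e i) • f i) (∑ i ∈ A, f i x • e i)| ≤
        t⁻¹ * φs A.card * φ B.card * ((B.card : ℝ))⁻¹ * ‖x‖ * ‖g‖ :=
  stmt9_general e f hbi φ φs hφ hφs t ht0 g B hB hgreedy
end

section
/- Let n have l-bounded gaps. If a basis B is Δ_b-n-bidemocratic, then B is bidemocratic with constant at most max{α₁α₂n₁, l·Δ_b}. -/
open Finset

/-- For a sequence with `l`-bounded gaps, `Δb`-`n`-bidemocracy implies
bidemocracy with constant at most `max (α₁α₂n₁) (lΔb)`. Bidemocracy is formalized in the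
equivalent pairwise form `‖1_{εA}‖·‖1*_{ε'B}‖ ≤ C·m` for all `|A|, |B| ≤ m`. -/
theorem stmt11
    {X : Type*} [NormedAddCommGroup X] [NormedSpace ℝ X]
    (e : ℕ → X) (f : ℕ → X →L[ℝ] ℝ)
    (hbi : ∀ i j, f i (e j) = if i = j then (1 : ℝ) else 0)
    (α₁ α₂ : ℝ) (hα₁pos : 0 < α₁) (hα₂pos : 0 < α₂)
    (hα₁ : ∀ i, ‖e i‖ ≤ α₁) (hα₂ : ∀ i, ‖f i‖ ≤ α₂)
    (nseq : ℕ → ℕ) (hmono : StrictMono nseq) (hn1 : 0 < nseq 0)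
    (l : ℕ) (hl : 2 ≤ l) (hgaps : ∀ k, nseq (k + 1) ≤ l * nseq k)
    (Δb : ℝ) (hΔb : 0 < Δb)
    (hbidem : ∀ (k : ℕ) (A B : Finset ℕ) (ε ε' : ℕ → ℝ),
      A.card ≤ nseq k → B.card ≤ nseq k →
      (∀ i ∈ A, |ε i| = 1) → (∀ i ∈ B, |ε' i| = 1) →
      ‖∑ i ∈ A, ε i • e i‖ * ‖∑ i ∈ B, ε' i • f i‖ ≤ Δb * (nseq k : ℝ)) :
    ∀ (m : ℕ) (A B : Finset ℕ) (ε ε' : ℕ → ℝ),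
      A.card ≤ m → B.card ≤ m →
      (∀ i ∈ A, |ε i| = 1) → (∀ i ∈ B, |ε' i| = 1) →
      ‖∑ i ∈ A, ε i • e i‖ * ‖∑ i ∈ B, ε' i • f i‖ ≤
        max (α₁ * α₂ * (nseq 0 : ℝ)) ((l : ℝ) * Δb) * (m : ℝ) := by
  intro m A B ε ε' hA hB hε hε'
  by_cases hm : m ≤ nseq 0
  · -- trivial bound via triangle inequality
    have h1 : ‖∑ i ∈ A, ε i • e i‖ ≤ α₁ * (m : ℝ) := by
      calc ‖∑ i ∈ A, ε i • e i‖ ≤ ∑ i ∈ A, ‖ε i • e i‖ := norm_sum_le _ _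
        _ ≤ ∑ _i ∈ A, α₁ := by
            refine Finset.sum_le_sum fun i hi => ?_
            rw [norm_smul, Real.norm_eq_abs, hε i hi, one_mul]
            exact hα₁ i
        _ = (A.card : ℝ) * α₁ := by rw [Finset.sum_const, nsmul_eq_mul]
        _ ≤ (m : ℝ) * α₁ := by
            exact mul_le_mul_of_nonneg_right (by exact_mod_cast hA) hα₁pos.le
        _ = α₁ * (m : ℝ) := mul_comm _ _
    have h2 : ‖∑ i ∈ B, ε' i • f i‖ ≤ α₂ * (m : ℝ) := by
      calc ‖∑ i ∈ B, ε' i • f i‖ ≤ ∑ i ∈ B, ‖ε' i • f i‖ := norm_sum_le _ _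
        _ ≤ ∑ _i ∈ B, α₂ := by
            refine Finset.sum_le_sum fun i hi => ?_
            rw [norm_smul (ε' i) (f i), Real.norm_eq_abs, hε' i hi, one_mul]
            exact hα₂ i
        _ = (B.card : ℝ) * α₂ := by rw [Finset.sum_const, nsmul_eq_mul]
        _ ≤ (m : ℝ) * α₂ := by
            exact mul_le_mul_of_nonneg_right (by exact_mod_cast hB) hα₂pos.le
        _ = α₂ * (m : ℝ) := mul_comm _ _
    calc ‖∑ i ∈ A, ε i • e i‖ * ‖∑ i ∈ B, ε' i • f i‖
        ≤ (α₁ * m) * (α₂ * m) := by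
          exact mul_le_mul h1 h2 (norm_nonneg _) (by positivity)
      _ = (α₁ * α₂ * m) * m := by ring
      _ ≤ max (α₁ * α₂ * (nseq 0 : ℝ)) ((l : ℝ) * Δb) * m := by
          refine mul_le_mul_of_nonneg_right ?_ (Nat.cast_nonneg m)
          refine le_max_of_le_left ?_
          refine mul_le_mul_of_nonneg_left (by exact_mod_cast hm) (by positivity)
  · push_neg at hm
    have hex : ∃ k, m ≤ nseq k := ⟨m, hmono.le_apply⟩
    have hmk : m ≤ nseq (Nat.find hex) := Nat.find_spec hex
    have hkpos : Nat.find hex ≠ 0 := by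
      intro h0
      rw [h0] at hmk
      omega
    obtain ⟨j, hj'⟩ := Nat.exists_eq_succ_of_ne_zero hkpos
    rw [hj'] at hmk
    have hj : ¬ m ≤ nseq j := by
      have := Nat.find_min hex (m := j) (by omega)
      exact this
    push_neg at hj
    have hnk : nseq (j + 1) ≤ l * m := le_trans (hgaps j) (Nat.mul_le_mul_left l hj.le)
    have hprod := hbidem (j + 1) A B ε ε' (hA.trans hmk) (hB.trans hmk) hε hε'
    calc ‖∑ i ∈ A, ε i • e i‖ * ‖∑ i ∈ B, ε' i • f i‖
        ≤ Δb * (nseq (j + 1) : ℝ) := hprod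
      _ ≤ Δb * ((l : ℝ) * m) := by
          refine mul_le_mul_of_nonneg_left ?_ hΔb.le
          exact_mod_cast hnk
      _ = ((l : ℝ) * Δb) * m := by ring
      _ ≤ max (α₁ * α₂ * (nseq 0 : ℝ)) ((l : ℝ) * Δb) * m :=
          mul_le_mul_of_nonneg_right (le_max_right _ _) (Nat.cast_nonneg m)
end

section
/- If B is Δ_b-n-bidemocratic, then: (i) B is Δ_s-n-superdemocratic with Δ_s ≤ Δ_b; (ii) B is Δ-n-symmetric for largest coefficients with Δ ≤ 1 + 2Δ_b; (iii) B has the n-UL property with constants C₁, C₂ ≤ Δ_b. -/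
open Finset

/-! Pairing the vector `x + 𝟙_{εB B}` with the functional `G = ∑_{i ∈ B} εB i • f i` gives
`|B| = G (x + 𝟙_{εB B}) ≤ ‖G‖ ‖x + 𝟙_{εB B}‖`, and bidemocracy bounds `‖𝟙_{εA A}‖ ‖G‖` by `Δ |B|`;
dividing out `‖G‖ |B|` gives `‖𝟙_{εA A}‖ ≤ Δ ‖x + 𝟙_{εB B}‖`. Superdemocracy is the case `x = 0`,
symmetry for largest coefficients follows by the triangle inequality, and the lower UL bound is the
same argument with `G` built from the signs of the coefficients. For the upper UL bound, convexity
of `t ↦ ‖y + t v‖` lets each coefficient of modulus `≤ 1` be replaced by a sign without decreasing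
the norm. -/

section Signs

variable {ι X : Type*} [NormedAddCommGroup X] [NormedSpace ℝ X]

theorem exists_abs_eq_one_norm_add_smul_le (y v : X) {a : ℝ} (ha : |a| ≤ 1) :
    ∃ s : ℝ, |s| = 1 ∧ ‖y + a • v‖ ≤ ‖y + s • v‖ := by
  have hmem : y + a • v ∈ segment ℝ (y + (-1 : ℝ) • v) (y + (1 : ℝ) • v) := by
    rw [abs_le] at ha
    refine ⟨(1 - a) / 2, (1 + a) / 2, by linarith, by linarith, by ring, by module⟩
  have hconv := convexOn_univ_norm.le_on_segment (Set.mem_univ _) (Set.mem_univ _) hmem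
  rcases le_total ‖y + (-1 : ℝ) • v‖ ‖y + (1 : ℝ) • v‖ with h | h
  · exact ⟨1, abs_one, hconv.trans (max_le h le_rfl)⟩
  · exact ⟨-1, by simp, hconv.trans (max_le le_rfl h)⟩

theorem exists_abs_eq_one_norm_add_sum_smul_le [DecidableEq ι] (v : ι → X) (s : Finset ι)
    (x : X) {a : ι → ℝ} (ha : ∀ i ∈ s, |a i| ≤ 1) :
    ∃ ε : ι → ℝ, (∀ i ∈ s, |ε i| = 1) ∧
      ‖x + ∑ i ∈ s, a i • v i‖ ≤ ‖x + ∑ i ∈ s, ε i • v i‖ := by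
  induction s using Finset.induction_on generalizing x with
  | empty => exact ⟨fun _ => 1, by simp, le_rfl⟩
  | @insert j t hj ih =>
    obtain ⟨ε, hε, hle⟩ := ih (x + a j • v j) fun i hi => ha i (mem_insert_of_mem hi)
    obtain ⟨σ, hσ, hσle⟩ := exists_abs_eq_one_norm_add_smul_le (x + ∑ i ∈ t, ε i • v i) (v j)
      (ha j (mem_insert_self j t))
    have hsum : ∑ i ∈ t, Function.update ε j σ i • v i = ∑ i ∈ t, ε i • v i :=
      sum_congr rfl fun i hi => by rw [Function.update_of_ne (ne_of_mem_of_not_mem hi hj)]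
    refine ⟨Function.update ε j σ, fun i hi => ?_, ?_⟩
    · rcases mem_insert.1 hi with rfl | hi
      · simpa using hσ
      · rw [Function.update_of_ne (ne_of_mem_of_not_mem hi hj)]
        exact hε i hi
    · rw [sum_insert hj, sum_insert hj, hsum, Function.update_self]
      calc ‖x + (a j • v j + ∑ i ∈ t, a i • v i)‖
          = ‖x + a j • v j + ∑ i ∈ t, a i • v i‖ := by rw [add_assoc]
        _ ≤ ‖x + ∑ i ∈ t, ε i • v i + a j • v j‖ := hle.trans_eq (by rw [add_right_comm])
        _ ≤ ‖x + ∑ i ∈ t, ε i • v i + σ • v j‖ := hσle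
        _ = ‖x + (σ • v j + ∑ i ∈ t, ε i • v i)‖ := by rw [add_assoc, add_comm (∑ i ∈ t, _)]

theorem norm_sum_smul_le_of_abs_le (v : ι → X) (s : Finset ι) {a : ι → ℝ} {M C : ℝ}
    (hM : 0 ≤ M) (ha : ∀ i ∈ s, |a i| ≤ M)
    (hsign : ∀ ε : ι → ℝ, (∀ i ∈ s, |ε i| = 1) → ‖∑ i ∈ s, ε i • v i‖ ≤ C) :
    ‖∑ i ∈ s, a i • v i‖ ≤ M * C := by
  classical
  rcases hM.eq_or_lt with rfl | hMpos
  · have hzero : ∀ i ∈ s, a i • v i = 0 := fun i hi => by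
      rw [abs_nonpos_iff.1 (ha i hi), zero_smul]
    rw [sum_eq_zero hzero, norm_zero, zero_mul]
  have hb : ∀ i ∈ s, |a i / M| ≤ 1 := fun i hi => by
    rw [abs_div, abs_of_pos hMpos, div_le_one hMpos]
    exact ha i hi
  obtain ⟨ε, hε, hle⟩ := exists_abs_eq_one_norm_add_sum_smul_le v s 0 hb
  rw [zero_add, zero_add] at hle
  have hscale : ∑ i ∈ s, a i • v i = M • ∑ i ∈ s, (a i / M) • v i := by
    rw [smul_sum]
    exact sum_congr rfl fun i _ => by rw [smul_smul, mul_div_cancel₀ _ hMpos.ne']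
  calc ‖∑ i ∈ s, a i • v i‖ = M * ‖∑ i ∈ s, (a i / M) • v i‖ := by
        rw [hscale, norm_smul, Real.norm_of_nonneg hM]
    _ ≤ M * C := by gcongr; exact hle.trans (hsign ε hε)

end Signs

theorem norm_mul_le_of_le_apply {X : Type*} [SeminormedAddCommGroup X] [NormedSpace ℝ X]
    (G : X →L[ℝ] ℝ) (u y : X) {n c Δ : ℝ} (hn : 0 < n) (hGy : c * n ≤ G y)
    (hpair : ‖u‖ * ‖G‖ ≤ Δ * n) : ‖u‖ * c ≤ Δ * ‖y‖ := by
  have hGy' : c * n ≤ ‖G‖ * ‖y‖ := hGy.trans ((le_abs_self _).trans (G.le_opNorm y))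
  refine le_of_mul_le_mul_right ?_ hn
  calc ‖u‖ * c * n = ‖u‖ * (c * n) := by ring
    _ ≤ ‖u‖ * (‖G‖ * ‖y‖) := by gcongr
    _ = ‖u‖ * ‖G‖ * ‖y‖ := by ring
    _ ≤ Δ * n * ‖y‖ := by gcongr
    _ = Δ * ‖y‖ * n := by ring

section Biorthogonal

variable {ι X : Type*} [DecidableEq ι] [NormedAddCommGroup X] [NormedSpace ℝ X]
  {e : ι → X} {f : ι → X →L[ℝ] ℝ}

theorem sum_smul_apply_sum_smul (hbi : ∀ i j, f i (e j) = if i = j then (1 : ℝ) else 0)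
    (s : Finset ι) (ε a : ι → ℝ) :
    (∑ i ∈ s, ε i • f i) (∑ j ∈ s, a j • e j) = ∑ i ∈ s, ε i * a i := by
  rw [_root_.sum_apply]
  exact sum_congr rfl fun i hi => by simp [map_sum, hbi, hi, mul_comm]

theorem sum_smul_apply_add_sum_smul (hbi : ∀ i j, f i (e j) = if i = j then (1 : ℝ) else 0)
    {s : Finset ι} {ε : ι → ℝ} (hε : ∀ i ∈ s, |ε i| = 1) {x : X} (hx : ∀ i ∈ s, f i x = 0) :
    (∑ i ∈ s, ε i • f i) (x + ∑ j ∈ s, ε j • e j) = s.card := by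
  have hx0 : (∑ i ∈ s, ε i • f i) x = 0 := by
    rw [_root_.sum_apply]
    exact sum_eq_zero fun i hi => by rw [smul_apply, hx i hi, smul_zero]
  have hsq : ∀ i ∈ s, ε i * ε i = 1 := fun i hi => by rw [← abs_mul_abs_self, hε i hi, one_mul]
  rw [map_add, hx0, zero_add, sum_smul_apply_sum_smul hbi, sum_congr rfl hsq, sum_const,
    nsmul_one]

theorem norm_sum_smul_le_of_pairing (hbi : ∀ i j, f i (e j) = if i = j then (1 : ℝ) else 0)
    {A B : Finset ι} {εA εB : ι → ℝ} {x : X} {Δ : ℝ} (hΔ : 0 ≤ Δ) (hAB : A.card ≤ B.card)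
    (hεB : ∀ i ∈ B, |εB i| = 1) (hx : ∀ i ∈ B, f i x = 0)
    (hpair : ‖∑ i ∈ A, εA i • e i‖ * ‖∑ i ∈ B, εB i • f i‖ ≤ Δ * B.card) :
    ‖∑ i ∈ A, εA i • e i‖ ≤ Δ * ‖x + ∑ i ∈ B, εB i • e i‖ := by
  rcases B.card.eq_zero_or_pos with hB | hB
  · rw [card_eq_zero.1 (by omega : A.card = 0), sum_empty, norm_zero]
    positivity
  simpa using norm_mul_le_of_le_apply _ _ _ (c := 1) (by exact_mod_cast hB)
    (by rw [one_mul, sum_smul_apply_add_sum_smul hbi hεB hx]) hpair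

theorem norm_add_sum_smul_le_of_pairing
    (hbi : ∀ i j, f i (e j) = if i = j then (1 : ℝ) else 0)
    {A B : Finset ι} {εA εB : ι → ℝ} {x : X} {Δ : ℝ} (hΔ : 0 ≤ Δ) (hAB : A.card ≤ B.card)
    (hεB : ∀ i ∈ B, |εB i| = 1) (hx : ∀ i ∈ B, f i x = 0)
    (hpairA : ‖∑ i ∈ A, εA i • e i‖ * ‖∑ i ∈ B, εB i • f i‖ ≤ Δ * B.card)
    (hpairB : ‖∑ i ∈ B, εB i • e i‖ * ‖∑ i ∈ B, εB i • f i‖ ≤ Δ * B.card) :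
    ‖x + ∑ i ∈ A, εA i • e i‖ ≤ (1 + 2 * Δ) * ‖x + ∑ i ∈ B, εB i • e i‖ := by
  have hA := norm_sum_smul_le_of_pairing hbi hΔ hAB hεB hx hpairA
  have hB := norm_sum_smul_le_of_pairing hbi hΔ le_rfl hεB hx hpairB
  have hsplit : x + ∑ i ∈ A, εA i • e i =
      (x + ∑ i ∈ B, εB i • e i) + -∑ i ∈ B, εB i • e i + ∑ i ∈ A, εA i • e i := by abel
  calc ‖x + ∑ i ∈ A, εA i • e i‖
      ≤ ‖x + ∑ i ∈ B, εB i • e i‖ + ‖∑ i ∈ B, εB i • e i‖ + ‖∑ i ∈ A, εA i • e i‖ := by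
        rw [hsplit, ← norm_neg (∑ i ∈ B, εB i • e i)]; exact norm_add₃_le
    _ ≤ (1 + 2 * Δ) * ‖x + ∑ i ∈ B, εB i • e i‖ := by linarith

theorem mul_norm_sum_le_of_pairing (hbi : ∀ i j, f i (e j) = if i = j then (1 : ℝ) else 0)
    {A : Finset ι} (hA : A.Nonempty) {a : ι → ℝ} {m Δ : ℝ} (hm : ∀ i ∈ A, m ≤ |a i|)
    (hpair : ∀ ε : ι → ℝ, (∀ i ∈ A, |ε i| = 1) →
      ‖∑ i ∈ A, e i‖ * ‖∑ i ∈ A, ε i • f i‖ ≤ Δ * A.card) :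
    m * ‖∑ i ∈ A, e i‖ ≤ Δ * ‖∑ i ∈ A, a i • e i‖ := by
  set ε : ι → ℝ := fun i => if 0 ≤ a i then 1 else -1
  have hε : ∀ i ∈ A, |ε i| = 1 := fun i _ => by by_cases h : 0 ≤ a i <;> simp [ε, h]
  have hεa : ∀ i ∈ A, ε i * a i = |a i| := fun i _ => by
    by_cases h : 0 ≤ a i
    · simp [ε, h, abs_of_nonneg h]
    · simp [ε, h, abs_of_neg (not_le.1 h)]
  have hGy : m * A.card ≤ (∑ i ∈ A, ε i • f i) (∑ j ∈ A, a j • e j) := by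
    rw [sum_smul_apply_sum_smul hbi, sum_congr rfl hεa, mul_comm, ← nsmul_eq_mul, ← sum_const]
    exact sum_le_sum hm
  rw [mul_comm]
  exact norm_mul_le_of_le_apply _ _ _ (by exact_mod_cast hA.card_pos) hGy (hpair ε hε)

end Biorthogonal

theorem stmt12_general
    {X : Type*} [NormedAddCommGroup X] [NormedSpace ℝ X]
    (e : ℕ → X) (f : ℕ → X →L[ℝ] ℝ)
    (hbi : ∀ i j, f i (e j) = if i = j then (1 : ℝ) else 0)
    (nseq : ℕ → ℕ)
    (Δb : ℝ) (hΔb : 0 < Δb)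
    (hbidem : ∀ (k : ℕ) (A B : Finset ℕ) (ε ε' : ℕ → ℝ),
      A.card ≤ nseq k → B.card ≤ nseq k →
      (∀ i ∈ A, |ε i| = 1) → (∀ i ∈ B, |ε' i| = 1) →
      ‖∑ i ∈ A, ε i • e i‖ * ‖∑ i ∈ B, ε' i • f i‖ ≤ Δb * (nseq k : ℝ)) :
    -- (i) n-superdemocracy with constant Δb
    (∀ (A B : Finset ℕ) (εA εB : ℕ → ℝ),
      A.card ≤ B.card → (∃ k, A.card = nseq k) → (∃ k, B.card = nseq k) →
      (∀ i ∈ A, |εA i| = 1) → (∀ i ∈ B, |εB i| = 1) →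
      ‖∑ i ∈ A, εA i • e i‖ ≤ Δb * ‖∑ i ∈ B, εB i • e i‖) ∧
    -- (ii) n-symmetry for largest coefficients with constant 1 + 2Δb
    (∀ (A B : Finset ℕ) (εA εB : ℕ → ℝ) (x : X),
      A.card ≤ B.card → (∃ k, A.card = nseq k) → (∃ k, B.card = nseq k) →
      Disjoint A B →
      (∀ i ∈ A, |εA i| = 1) → (∀ i ∈ B, |εB i| = 1) →
      (∀ i, |f i x| ≤ 1) → (∀ i ∈ A ∪ B, f i x = 0) →
      ‖x + ∑ i ∈ A, εA i • e i‖ ≤ (1 + 2 * Δb) * ‖x + ∑ i ∈ B, εB i • e i‖) ∧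
    -- (iii) the n-UL property with constants Δb, Δb
    (∀ (A : Finset ℕ) (hA : A.Nonempty) (a : ℕ → ℝ), (∃ k, A.card = nseq k) →
      Δb⁻¹ * (A.inf' hA fun i => |a i|) * ‖∑ i ∈ A, e i‖ ≤ ‖∑ i ∈ A, a i • e i‖ ∧
      ‖∑ i ∈ A, a i • e i‖ ≤ Δb * (A.sup' hA fun i => |a i|) * ‖∑ i ∈ A, e i‖) := by
  have hpair : ∀ {A B : Finset ℕ} {εA εB : ℕ → ℝ} {k : ℕ}, A.card ≤ B.card → B.card = nseq k →
      (∀ i ∈ A, |εA i| = 1) → (∀ i ∈ B, |εB i| = 1) →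
      ‖∑ i ∈ A, εA i • e i‖ * ‖∑ i ∈ B, εB i • f i‖ ≤ Δb * B.card :=
    fun hAB hB hεA hεB => hB ▸ hbidem _ _ _ _ _ (hB ▸ hAB) hB.le hεA hεB
  have hsuper : ∀ (A B : Finset ℕ) (εA εB : ℕ → ℝ),
      A.card ≤ B.card → (∃ k, A.card = nseq k) → (∃ k, B.card = nseq k) →
      (∀ i ∈ A, |εA i| = 1) → (∀ i ∈ B, |εB i| = 1) →
      ‖∑ i ∈ A, εA i • e i‖ ≤ Δb * ‖∑ i ∈ B, εB i • e i‖ := by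
    rintro A B εA εB hAB - ⟨k, hB⟩ hεA hεB
    simpa using norm_sum_smul_le_of_pairing (x := 0) hbi hΔb.le hAB hεB (fun i _ => map_zero _)
      (hpair hAB hB hεA hεB)
  refine ⟨hsuper, ?_, ?_⟩
  · rintro A B εA εB x hAB - ⟨k, hB⟩ - hεA hεB - hx
    exact norm_add_sum_smul_le_of_pairing hbi hΔb.le hAB hεB
      (fun i hi => hx i (mem_union_right A hi)) (hpair hAB hB hεA hεB) (hpair le_rfl hB hεB hεB)
  · rintro A hA a ⟨k, hAk⟩
    have hones : ∀ i ∈ A, |(1 : ℝ)| = 1 := fun _ _ => abs_one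
    constructor
    · rw [mul_assoc, inv_mul_le_iff₀ hΔb]
      refine mul_norm_sum_le_of_pairing hbi hA (fun i hi => inf'_le _ hi) fun ε hε => ?_
      simpa using hpair le_rfl hAk hones hε
    · rw [mul_comm Δb, mul_assoc]
      have hle : ∀ i ∈ A, |a i| ≤ A.sup' hA fun i => |a i| :=
        fun i hi => le_sup' (fun i => |a i|) hi
      refine norm_sum_smul_le_of_abs_le e A ((abs_nonneg _).trans (hle _ hA.choose_spec)) hle
        fun ε hε => ?_
      simpa using hsuper A A ε 1 le_rfl ⟨k, hAk⟩ ⟨k, hAk⟩ hε hones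

/-- If `B` is `Δb`-`n`-bidemocratic (pairwise form), then: (i) it is
`n`-superdemocratic with constant ≤ Δb; (ii) it is `n`-symmetric for largest coefficients
with constant ≤ 1 + 2Δb; (iii) it has the `n`-UL property with constants ≤ Δb. -/
theorem stmt12
    {X : Type*} [NormedAddCommGroup X] [NormedSpace ℝ X]
    (e : ℕ → X) (f : ℕ → X →L[ℝ] ℝ)
    (hbi : ∀ i j, f i (e j) = if i = j then (1 : ℝ) else 0)
    (α₁ α₂ : ℝ) (hα₁pos : 0 < α₁) (hα₂pos : 0 < α₂)
    (hα₁ : ∀ i, ‖e i‖ ≤ α₁) (hα₂ : ∀ i, ‖f i‖ ≤ α₂)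
    (nseq : ℕ → ℕ) (hmono : StrictMono nseq) (hn1 : 0 < nseq 0)
    (Δb : ℝ) (hΔb : 0 < Δb)
    (hbidem : ∀ (k : ℕ) (A B : Finset ℕ) (ε ε' : ℕ → ℝ),
      A.card ≤ nseq k → B.card ≤ nseq k →
      (∀ i ∈ A, |ε i| = 1) → (∀ i ∈ B, |ε' i| = 1) →
      ‖∑ i ∈ A, ε i • e i‖ * ‖∑ i ∈ B, ε' i • f i‖ ≤ Δb * (nseq k : ℝ)) :
    -- (i) n-superdemocracy with constant Δb
    (∀ (A B : Finset ℕ) (εA εB : ℕ → ℝ),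
      A.card ≤ B.card → (∃ k, A.card = nseq k) → (∃ k, B.card = nseq k) →
      (∀ i ∈ A, |εA i| = 1) → (∀ i ∈ B, |εB i| = 1) →
      ‖∑ i ∈ A, εA i • e i‖ ≤ Δb * ‖∑ i ∈ B, εB i • e i‖) ∧
    -- (ii) n-symmetry for largest coefficients with constant 1 + 2Δb
    (∀ (A B : Finset ℕ) (εA εB : ℕ → ℝ) (x : X),
      A.card ≤ B.card → (∃ k, A.card = nseq k) → (∃ k, B.card = nseq k) →
      Disjoint A B →
      (∀ i ∈ A, |εA i| = 1) → (∀ i ∈ B, |εB i| = 1) →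
      (∀ i, |f i x| ≤ 1) → (∀ i ∈ A ∪ B, f i x = 0) →
      ‖x + ∑ i ∈ A, εA i • e i‖ ≤ (1 + 2 * Δb) * ‖x + ∑ i ∈ B, εB i • e i‖) ∧
    -- (iii) the n-UL property with constants Δb, Δb
    (∀ (A : Finset ℕ) (hA : A.Nonempty) (a : ℕ → ℝ), (∃ k, A.card = nseq k) →
      Δb⁻¹ * (A.inf' hA fun i => |a i|) * ‖∑ i ∈ A, e i‖ ≤ ‖∑ i ∈ A, a i • e i‖ ∧
      ‖∑ i ∈ A, a i • e i‖ ≤ Δb * (A.sup' hA fun i => |a i|) * ‖∑ i ∈ A, e i‖) :=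
  stmt12_general e f hbi nseq Δb hΔb hbidem
end

section
/- If a semi-normalized Markushevich basis B is K_s-n-suppression unconditional (i.e. ‖P_A(x)‖ ≤ K_s‖x‖ for all x ∈ X and all A with |A| ∈ n), then B is K_s-suppression unconditional: ‖P_A(x)‖ ≤ K_s‖x‖ for all x ∈ X and all finite A ⊂ ℕ. -/
open Finset

/-- If a semi-normalized Markushevich basis is `Ks`-`n`-suppression
unconditional, then it is `Ks`-suppression unconditional (for all finite sets). -/
theorem stmt13
    {X : Type*} [NormedAddCommGroup X] [NormedSpace ℝ X]
    (e : ℕ → X) (f : ℕ → X →L[ℝ] ℝ)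
    (hbi : ∀ i j, f i (e j) = if i = j then (1 : ℝ) else 0)
    (α₁ α₂ : ℝ) (hα₁pos : 0 < α₁) (hα₂pos : 0 < α₂)
    (hα₁ : ∀ i, ‖e i‖ ≤ α₁) (hα₂ : ∀ i, ‖f i‖ ≤ α₂)
    (hdense : Dense (↑(Submodule.span ℝ (Set.range e)) : Set X))
    (nseq : ℕ → ℕ) (hmono : StrictMono nseq) (hn1 : 0 < nseq 0)
    (Ks : ℝ) (hKs : 0 < Ks)
    (hsupp : ∀ (x : X) (A : Finset ℕ), (∃ k, A.card = nseq k) →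
      ‖∑ i ∈ A, f i x • e i‖ ≤ Ks * ‖x‖) :
    ∀ (x : X) (A : Finset ℕ), ‖∑ i ∈ A, f i x • e i‖ ≤ Ks * ‖x‖ := by
  -- Step 1: the claim for finitely supported vectors
  have hspan : ∀ z ∈ Submodule.span ℝ (Set.range e), ∀ A : Finset ℕ,
      ‖∑ i ∈ A, f i z • e i‖ ≤ Ks * ‖z‖ := by
    intro z hz A
    obtain ⟨c, hc⟩ := (Finsupp.mem_span_range_iff_exists_finsupp).1 hz
    have hfz : ∀ j, f j z = c j := by
      intro j
      rw [← hc, Finsupp.sum, map_sum]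
      simp only [map_smul, hbi, smul_eq_mul]
      rw [Finset.sum_eq_single j]
      · by_cases h : j ∈ c.support
        · simp
        · simp [Finsupp.notMem_support_iff.1 h]
      · intro b _ hb
        simp [Ne.symm hb]
      · intro h
        simp [Finsupp.notMem_support_iff.1 h]
    -- choose the extra set C
    set S := c.support ∪ A with hS
    set N := S.sup id + 1 with hN
    set m := nseq A.card - A.card with hm
    set C := (Finset.range m).image (· + N) with hC
    have hcardC : C.card = m := by
      rw [hC, Finset.card_image_of_injective _ (add_left_injective N), Finset.card_range]
    have hdisj : Disjoint S C := by
      rw [Finset.disjoint_right]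
      intro a haC haS
      obtain ⟨b, _, rfl⟩ := Finset.mem_image.1 haC
      have : b + N ≤ S.sup id := Finset.le_sup (f := id) haS
      omega
    have hdisjA : Disjoint A C := hdisj.mono_left (Finset.subset_union_right)
    have hcard : (A ∪ C).card = nseq A.card := by
      rw [Finset.card_union_of_disjoint hdisjA, hcardC, hm]
      have : A.card ≤ nseq A.card := hmono.le_apply
      omega
    have key := hsupp z (A ∪ C) ⟨A.card, hcard⟩
    have hzero : ∑ i ∈ C, f i z • e i = 0 := by
      apply Finset.sum_eq_zero
      intro i hiC
      have hiS : i ∉ c.support := fun h =>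
        (Finset.disjoint_left.1 hdisj (Finset.mem_union_left _ h)) hiC
      rw [hfz, Finsupp.notMem_support_iff.1 hiS, zero_smul]
    rwa [Finset.sum_union hdisjA, hzero, add_zero] at key
  -- Step 2: extend by density and continuity
  intro x A
  have hcont1 : Continuous fun y : X => ‖∑ i ∈ A, f i y • e i‖ := by
    fun_prop
  have hcont2 : Continuous fun y : X => Ks * ‖y‖ := by fun_prop
  have := le_on_closure (f := fun y : X => ‖∑ i ∈ A, f i y • e i‖)
    (g := fun y : X => Ks * ‖y‖) (s := (↑(Submodule.span ℝ (Set.range e)) : Set X))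
    (fun y hy => hspan y hy A) hcont1.continuousOn hcont2.continuousOn
  exact this (x := x) (by rw [hdense.closure_eq]; trivial)
end
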